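/- arXiv:1710.01587 — 9 statements merged into one kernel-verified Lean document; each statement's English description precedes it below -/
import Mathlib

section
/- Let V be a finite set and d a metric on V. For y ∈ V define A_y(x,z) = 1 if x = y = z and A_y(x,z) = (d(x,y)+d(y,z)-d(x,z))/2 otherwise. For distinct x, y ∈ V let T_{xy} be the matrix with T_{xy}(w,z) = 1 if w = z and w ∉ {x,y}; -1 if (w ≠ y, z = y) or (w = y, z = x); 0 otherwise. Then T_{xy} · A_x · T_{xy}ᵗ = A_y. -/
def IsMetric {W : Type*} (d : W → W → ℝ) : Prop :=
  (∀ x y, 0 ≤ d x y) ∧ (∀ x y, d x y = 0 ↔ x = y) ∧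
  (∀ x y, d x y = d y x) ∧ (∀ x y z, d x z ≤ d x y + d y z)

noncomputable def Mdef {W : Type*} (d : W → W → ℝ) (y x z : W) : ℝ :=
  (d x y + d y z - d x z) / 2

noncomputable def Amat {W : Type*} [DecidableEq W] (d : W → W → ℝ) (y : W) : Matrix W W ℝ :=
  Matrix.of fun x z => if x = y ∧ z = y then 1 else (d x y + d y z - d x z) / 2

noncomputable def Mres {W : Type*} (d : W → W → ℝ) (y : W) :
    Matrix {z : W // z ≠ y} {z : W // z ≠ y} ℝ :=
  Matrix.of fun a b => (d a.1 y + d y b.1 - d a.1 b.1) / 2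

noncomputable def bvec {W : Type*} [DecidableEq W] (y : W) : W → ℝ :=
  fun x => if x = y then 0 else 1

noncomputable def Tmat {W : Type*} [DecidableEq W] (x y : W) : Matrix W W ℝ :=
  Matrix.of fun w z =>
    if w = z ∧ w ≠ x ∧ w ≠ y then 1
    else if (w ≠ y ∧ z = y) ∨ (w = y ∧ z = x) then -1 else 0

lemma Tentry {V : Type*} [DecidableEq V] (x y : V) (hxy : x ≠ y) (w z : V) :
    Tmat x y w z =
      if w = x then (if z = y then -1 else 0)
      else if w = y then (if z = x then -1 else 0)
      else (if w = z then 1 else 0) + (if z = y then -1 else 0) := by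
  simp only [Tmat, Matrix.of_apply]
  by_cases h1 : w = x <;> by_cases h2 : w = y <;> by_cases h3 : w = z <;>
    by_cases h4 : z = y <;> by_cases h5 : z = x <;> simp_all

lemma Tmul {V : Type*} [Fintype V] [DecidableEq V] (x y : V) (hxy : x ≠ y)
    (B : Matrix V V ℝ) (w w' : V) :
    (Tmat x y * B) w w' =
      if w = x then -B y w' else if w = y then -B x w' else B w w' - B y w' := by
  rw [Matrix.mul_apply]
  simp only [Tentry x y hxy]
  by_cases hwx : w = x
  · simp [hwx, ite_mul, Finset.sum_ite_eq]
  · by_cases hwy : w = y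
    · simp [hwx, hwy, ite_mul, Finset.sum_ite_eq]
    · simp [hwx, hwy, ite_mul, add_mul, Finset.sum_add_distrib,
        Finset.sum_ite_eq, Finset.sum_ite_eq', sub_eq_add_neg]

lemma mulT {V : Type*} [Fintype V] [DecidableEq V] (x y : V) (hxy : x ≠ y)
    (B : Matrix V V ℝ) (w w' : V) :
    (B * (Tmat x y).transpose) w w' =
      if w' = x then -B w y else if w' = y then -B w x else B w w' - B w y := by
  have hB : B * (Tmat x y).transpose = ((Tmat x y) * B.transpose).transpose := by
    rw [Matrix.transpose_mul, Matrix.transpose_transpose]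
  rw [hB, Matrix.transpose_apply, Tmul x y hxy B.transpose w' w]
  simp [Matrix.transpose_apply]

theorem stmt3 {V : Type*} [Fintype V] [DecidableEq V] (d : V → V → ℝ) (hd : IsMetric d)
    (x y : V) (hxy : x ≠ y) :
    Tmat x y * Amat d x * (Tmat x y).transpose = Amat d y := by
  obtain ⟨hpos, hzero, hsymm, htri⟩ := hd
  have h0 : ∀ a, d a a = 0 := fun a => (hzero a a).2 rfl
  have hyx : ¬ y = x := fun h => hxy h.symm
  ext w w'
  rw [mulT x y hxy (Tmat x y * Amat d x) w w']
  simp only [Tmul x y hxy (Amat d x)]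
  simp only [Amat, Matrix.of_apply]
  by_cases hwx : w = x <;> by_cases hwy : w = y <;> by_cases hw'x : w' = x <;>
    by_cases hw'y : w' = y <;>
    simp_all [h0, hyx] <;>
    linarith [(hzero x x).2 rfl, (hzero y y).2 rfl, (hzero w w).2 rfl, (hzero w' w').2 rfl, hsymm x y, hsymm w y, hsymm y w', hsymm x w',
      hsymm w x, hsymm y x, hsymm w w', hsymm x w, hsymm w' y, hsymm w' x]
end

section
/- Let G = (V, c) be a finite connected weighted graph (c symmetric, nonnegative, zero diagonal) with normalized Laplacian Δ(x,y) = δ_x(y) - c(x,y)/c_x where c_x = Σ_y c(x,y) > 0. Then for any y ∈ V, the determinant of the restriction of Δ to (V \ {y}) × (V \ {y}) is strictly positive. -/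
noncomputable def deg {W : Type*} [Fintype W] (c : W → W → ℝ) (x : W) : ℝ := ∑ y, c x y

def IsWeight {W : Type*} (c : W → W → ℝ) : Prop :=
  (∀ x y, 0 ≤ c x y) ∧ (∀ x y, c x y = c y x) ∧ (∀ x, c x x = 0)

def Conn {W : Type*} (c : W → W → ℝ) : Prop :=
  ∀ x y, Relation.ReflTransGen (fun a b => 0 < c a b) x y

noncomputable def lap {W : Type*} [Fintype W] (c : W → W → ℝ) (φ : W → ℝ) (x : W) : ℝ :=
  φ x - ∑ y, (c x y / deg c x) * φ y

def IsDirichlet {W : Type*} [Fintype W] [DecidableEq W] (c : W → W → ℝ) (x y : W)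
    (φ : W → ℝ) : Prop :=
  (∀ z, lap c φ z =
      (if z = x then 1 / deg c x else 0) - (if z = y then 1 / deg c y else 0)) ∧
  φ y = 0

def IsEffRes {W : Type*} [Fintype W] [DecidableEq W] (c : W → W → ℝ) (R : W → W → ℝ) : Prop :=
  (∀ x, R x x = 0) ∧ ∀ x y, x ≠ y → ∃ φ, IsDirichlet c x y φ ∧ φ x = R x y

noncomputable def lapM {W : Type*} [Fintype W] [DecidableEq W] (c : W → W → ℝ) :
    Matrix W W ℝ :=
  Matrix.of fun x z => (if x = z then (1 : ℝ) else 0) - c x z / deg c x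

/-! The restricted Laplacian factors as `D⁻¹ L`, where `D` is the diagonal of degrees and
`L = D - c` is the combinatorial Laplacian restricted to `V \ {y}`. By symmetry of `c`,
`2 uᵀ L u = ∑ c x z (u x - u z)²`, the Dirichlet energy of `u` extended by `0` at `y`. Since the
weights are nonnegative, zero energy forces `u` to be constant along every edge, hence (by
connectivity) equal to its value `0` at `y`. So the restriction of `L` is positive definite,
and `det (D⁻¹ L) = det D⁻¹ · det L > 0`. -/

open Matrix

section
variable {V : Type*} [Fintype V] (c : V → V → ℝ)

noncomputable def combLapM [DecidableEq V] : Matrix V V ℝ := diagonal (deg c) - of c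

def dirichletEnergy (u : V → ℝ) : ℝ := ∑ x, ∑ z, c x z * (u x - u z) ^ 2

variable {c}

lemma two_mul_dotProduct_combLapM_mulVec [DecidableEq V] (hsymm : ∀ x z, c x z = c z x)
    (u : V → ℝ) : 2 * (u ⬝ᵥ (combLapM c *ᵥ u)) = dirichletEnergy c u := by
  have hdiag : u ⬝ᵥ (diagonal (deg c) *ᵥ u) = ∑ x, ∑ z, c x z * u x ^ 2 := by
    simp only [dotProduct, mulVec_diagonal, deg, Finset.sum_mul, Finset.mul_sum]
    exact Finset.sum_congr rfl fun x _ => Finset.sum_congr rfl fun z _ => by ring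
  have hswap : ∑ x, ∑ z, c x z * u x ^ 2 = ∑ x, ∑ z, c x z * u z ^ 2 := by
    rw [Finset.sum_comm]
    exact Finset.sum_congr rfl fun x _ => Finset.sum_congr rfl fun z _ => by rw [hsymm]
  have hoff : u ⬝ᵥ (of c *ᵥ u) = ∑ x, ∑ z, c x z * (u x * u z) := by
    simp only [dotProduct, mulVec, of_apply, Finset.mul_sum]
    exact Finset.sum_congr rfl fun x _ => Finset.sum_congr rfl fun z _ => by ring
  have hexpand : dirichletEnergy c u
      = ∑ x, ∑ z, c x z * u x ^ 2 + ∑ x, ∑ z, c x z * u z ^ 2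
        - 2 * ∑ x, ∑ z, c x z * (u x * u z) := by
    simp only [dirichletEnergy, Finset.mul_sum, ← Finset.sum_add_distrib, ← Finset.sum_sub_distrib]
    exact Finset.sum_congr rfl fun x _ => Finset.sum_congr rfl fun z _ => by ring
  rw [hexpand, combLapM, sub_mulVec, dotProduct_sub, hdiag, hoff, ← hswap]
  ring

lemma dirichletEnergy_nonneg (hnn : ∀ x z, 0 ≤ c x z) (u : V → ℝ) : 0 ≤ dirichletEnergy c u :=
  Finset.sum_nonneg fun x _ => Finset.sum_nonneg fun z _ => mul_nonneg (hnn x z) (sq_nonneg _)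

lemma eq_of_dirichletEnergy_eq_zero (hnn : ∀ x z, 0 ≤ c x z) (hconn : Conn c) {u : V → ℝ}
    (h : dirichletEnergy c u = 0) (x z : V) : u x = u z := by
  have hterm : ∀ a b, c a b * (u a - u b) ^ 2 = 0 := fun a b =>
    (Finset.sum_eq_zero_iff_of_nonneg fun _ _ => mul_nonneg (hnn a _) (sq_nonneg _)).1
      ((Finset.sum_eq_zero_iff_of_nonneg fun x _ => Finset.sum_nonneg fun z _ =>
        mul_nonneg (hnn x z) (sq_nonneg _)).1 h a (Finset.mem_univ _)) b (Finset.mem_univ _)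
  induction hconn x z with
  | refl => rfl
  | @tail a b _ hab ih =>
    have := (mul_eq_zero.1 (hterm a b)).resolve_left hab.ne'
    rw [ih]; exact sub_eq_zero.1 (sq_eq_zero_iff.1 this)

lemma dotProduct_submatrix_mulVec_subtype_ne {R : Type*} [CommSemiring R] [DecidableEq V]
    (A : Matrix V V R) {y : V} {u : V → R} (hu : u y = 0) :
    (fun a : {z // z ≠ y} => u a)
        ⬝ᵥ (A.submatrix Subtype.val Subtype.val *ᵥ fun a : {z // z ≠ y} => u a)
      = u ⬝ᵥ (A *ᵥ u) := by
  simp only [dotProduct, mulVec, submatrix_apply,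
    Fintype.sum_eq_add_sum_subtype_ne (fun x => u x * _) y, hu, zero_mul, zero_add,
    Fintype.sum_eq_add_sum_subtype_ne (fun z => A _ z * u z) y, mul_zero]

lemma isHermitian_combLapM [DecidableEq V] (hsymm : ∀ x z, c x z = c z x) :
    (combLapM c).IsHermitian :=
  (isHermitian_diagonal _).sub (IsHermitian.ext fun x z => hsymm z x)

lemma posDef_combLapM_submatrix_subtype_ne [DecidableEq V] (hnn : ∀ x z, 0 ≤ c x z)
    (hsymm : ∀ x z, c x z = c z x) (hconn : Conn c) (y : V) :
    ((combLapM c).submatrix (Subtype.val : {z // z ≠ y} → V) Subtype.val).PosDef := by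
  refine .of_dotProduct_mulVec_pos ((isHermitian_combLapM hsymm).submatrix _) fun v hv => ?_
  let u : V → ℝ := fun x => if h : x = y then 0 else v ⟨x, h⟩
  have hv_eq : v = fun a : {z // z ≠ y} => u a := funext fun a => by simp [u, a.2]
  have huy : u y = 0 := dif_pos rfl
  rw [star_trivial, hv_eq, dotProduct_submatrix_mulVec_subtype_ne _ huy]
  have hpos : 0 < dirichletEnergy c u := (dirichletEnergy_nonneg hnn u).lt_of_ne' fun h =>
    hv (by rw [hv_eq]; funext a; exact (eq_of_dirichletEnergy_eq_zero hnn hconn h a y).trans huy)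
  linarith [two_mul_dotProduct_combLapM_mulVec hsymm u]

lemma lapM_eq_diagonal_inv_mul_combLapM [DecidableEq V] (hdeg : ∀ x, deg c x ≠ 0) :
    lapM c = diagonal (deg c)⁻¹ * combLapM c := by
  ext x z
  rw [lapM, of_apply, diagonal_mul, combLapM, Matrix.sub_apply, diagonal_apply, of_apply,
    Pi.inv_apply, mul_sub, mul_ite, inv_mul_cancel₀ (hdeg x), mul_zero, div_eq_inv_mul]

end

theorem stmt5 {V : Type*} [Fintype V] [DecidableEq V] (c : V → V → ℝ)
    (hw : IsWeight c) (hconn : Conn c) (hdeg : ∀ x, 0 < deg c x) (y : V) :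
    0 < (Matrix.of fun a b : {z : V // z ≠ y} => lapM c a.1 b.1).det := by
  obtain ⟨hnn, hsymm, -⟩ := hw
  have hfactor : (Matrix.of fun a b : {z : V // z ≠ y} => lapM c a.1 b.1)
      = diagonal (fun a : {z // z ≠ y} => (deg c a)⁻¹)
        * (combLapM c).submatrix Subtype.val Subtype.val := by
    ext a b
    rw [of_apply, lapM_eq_diagonal_inv_mul_combLapM fun x => (hdeg x).ne']
    simp only [diagonal_mul, submatrix_apply, Pi.inv_apply]
  rw [hfactor, det_mul, det_diagonal]
  exact mul_pos (Finset.prod_pos fun a _ => inv_pos.2 (hdeg a))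
    (posDef_combLapM_submatrix_subtype_ne hnn hsymm hconn y).det_pos
end

section
/- Star-mesh transform preserves effective resistance: let (V,c) be a finite connected weighted graph with |V| ≥ 3, fix x₀ ∈ V, and define c'(x,y) = c(x,y) + c(x,x₀)c(x₀,y)/c_{x₀} for distinct x, y ∈ V \ {x₀} and c'(x,x) = 0. Then (V \ {x₀}, c') is connected and its effective resistance satisfies R'(x,y) = R(x,y) for all x, y ∈ V \ {x₀}, where R is the effective resistance of (V,c). -/
noncomputable def starMesh {W : Type*} [Fintype W] [DecidableEq W] (c : W → W → ℝ)
    (x₀ : W) : {z : W // z ≠ x₀} → {z : W // z ≠ x₀} → ℝ :=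
  fun a b => if a = b then 0 else c a.1 b.1 + c a.1 x₀ * c x₀ b.1 / deg c x₀

noncomputable def ulap {W : Type*} [Fintype W] (c : W → W → ℝ) (φ : W → ℝ) (x : W) : ℝ :=
  deg c x * φ x - ∑ y, c x y * φ y
lemma lap_eq_ulap {W : Type*} [Fintype W] (c : W → W → ℝ) (φ : W → ℝ) (x : W)
    (h : deg c x ≠ 0) : lap c φ x = ulap c φ x / deg c x := by
  unfold lap ulap
  rw [sub_div, Finset.sum_div]
  congr 1
  · field_simp
  · apply Finset.sum_congr rfl
    intro y _
    rw [div_mul_eq_mul_div]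
lemma sum_subtype_ne {W : Type*} [Fintype W] [DecidableEq W] (x₀ : W) (f : W → ℝ) :
    ∑ w : {z : W // z ≠ x₀}, f w.1 = (∑ w, f w) - f x₀ := by
  rw [← Finset.sum_erase_eq_sub (Finset.mem_univ x₀)]
  exact (Finset.sum_subtype (Finset.univ.erase x₀)
    (fun x => by simp [Finset.mem_erase]) f).symm
lemma harmonic_const {W : Type*} [Fintype W] (c : W → W → ℝ)
    (hnn : ∀ a b, 0 ≤ c a b) (hdeg : ∀ z, 0 < deg c z) (hconn : Conn c)
    (h : W → ℝ) (hh : ∀ z, lap c h z = 0) : ∀ u v, h u = h v := by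
  intro u v
  have hne : (Finset.univ : Finset W).Nonempty := ⟨u, Finset.mem_univ u⟩
  obtain ⟨z, -, hz⟩ := Finset.exists_max_image Finset.univ h hne
  set M := h z with hM
  have hle : ∀ w, h w ≤ M := fun w => hz w (Finset.mem_univ w)
  -- propagation: if h a = M and c a b > 0 then h b = M
  have prop : ∀ a b, 0 < c a b → h a = M → h b = M := by
    intro a b hab ha
    have h1 : h a = ∑ w, (c a w / deg c a) * h w := by
      have := hh a; unfold lap at this; linarith
    have h2 : ∑ w, (c a w / deg c a) * M = M := by
      rw [← Finset.sum_mul]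
      rw [← Finset.sum_div]
      have : (∑ w, c a w) = deg c a := rfl
      rw [this, div_self (hdeg a).ne', one_mul]
    have h3 : ∑ w, (c a w / deg c a) * (M - h w) = 0 := by
      have : ∑ w, (c a w / deg c a) * (M - h w)
          = (∑ w, (c a w / deg c a) * M) - ∑ w, (c a w / deg c a) * h w := by
        rw [← Finset.sum_sub_distrib]; apply Finset.sum_congr rfl; intro w _; ring
      rw [this, h2, ← h1, ha]; ring
    have h4 : ∀ w ∈ Finset.univ, 0 ≤ (c a w / deg c a) * (M - h w) := by
      intro w _
      apply mul_nonneg (div_nonneg (hnn a w) (hdeg a).le)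
      linarith [hle w]
    have h5 := (Finset.sum_eq_zero_iff_of_nonneg h4).1 h3 b (Finset.mem_univ b)
    have hpos : 0 < c a b / deg c a := div_pos hab (hdeg a)
    have : M - h b = 0 := by
      rcases mul_eq_zero.1 h5 with h' | h'
      · exact absurd h' hpos.ne'
      · exact h'
    linarith [ha ▸ this]
  have reach : ∀ w, h w = M := by
    intro w
    have := hconn z w
    induction this with
    | refl => rfl
    | tail _ hbc ih => exact prop _ _ hbc ih
  rw [reach u, reach v]
lemma dirichlet_unique {W : Type*} [Fintype W] [DecidableEq W] (c : W → W → ℝ)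
    (hnn : ∀ a b, 0 ≤ c a b) (hdeg : ∀ z, 0 < deg c z) (hconn : Conn c)
    {x y : W} {φ₁ φ₂ : W → ℝ} (h1 : IsDirichlet c x y φ₁) (h2 : IsDirichlet c x y φ₂) :
    ∀ z, φ₁ z = φ₂ z := by
  intro z
  set h : W → ℝ := fun w => φ₁ w - φ₂ w with hdef
  have hl : ∀ w, lap c h w = 0 := by
    intro w
    have : lap c h w = lap c φ₁ w - lap c φ₂ w := by
      unfold lap
      have hs : ∑ u, (c w u / deg c w) * h u
          = (∑ u, (c w u / deg c w) * φ₁ u) - ∑ u, (c w u / deg c w) * φ₂ u := by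
        rw [← Finset.sum_sub_distrib]
        apply Finset.sum_congr rfl
        intro u _; simp only [hdef]; ring
      rw [hs]; simp only [hdef]; ring
    rw [this, h1.1 w, h2.1 w]; ring
  have := harmonic_const c hnn hdeg hconn h hl z y
  have hy : h y = 0 := by simp only [hdef, h1.2, h2.2, sub_zero]
  have : h z = 0 := by rw [this, hy]
  simpa [hdef, sub_eq_zero] using this
lemma sum_starMesh {V : Type*} [Fintype V] [DecidableEq V] (c : V → V → ℝ)
    (hw : IsWeight c) (x₀ : V) (hd : deg c x₀ ≠ 0) (z : {w : V // w ≠ x₀}) (φ : V → ℝ)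
    (hφ : ∑ w, c x₀ w * φ w = deg c x₀ * φ x₀) :
    ∑ w : {w : V // w ≠ x₀}, starMesh c x₀ z w * φ w.1
      = (∑ w, c z.1 w * φ w) - (c z.1 x₀ * c x₀ z.1 / deg c x₀) * φ z.1 := by
  have step1 : ∀ w : {w : V // w ≠ x₀}, starMesh c x₀ z w * φ w.1
      = (c z.1 w.1 + c z.1 x₀ * c x₀ w.1 / deg c x₀) * φ w.1
        - (if z = w then (c z.1 w.1 + c z.1 x₀ * c x₀ w.1 / deg c x₀) * φ w.1 else 0) := by
    intro w
    unfold starMesh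
    split_ifs with h
    · ring
    · ring
  rw [Finset.sum_congr rfl (fun w _ => step1 w), Finset.sum_sub_distrib,
    Finset.sum_ite_eq Finset.univ z
      (fun w => (c z.1 w.1 + c z.1 x₀ * c x₀ w.1 / deg c x₀) * φ w.1)]
  simp only [Finset.mem_univ, if_true]
  rw [sum_subtype_ne x₀ (fun w => (c z.1 w + c z.1 x₀ * c x₀ w / deg c x₀) * φ w)]
  have e1 : ∑ w, (c z.1 w + c z.1 x₀ * c x₀ w / deg c x₀) * φ w
      = (∑ w, c z.1 w * φ w) + (c z.1 x₀ / deg c x₀) * ∑ w, c x₀ w * φ w := by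
    rw [Finset.mul_sum, ← Finset.sum_add_distrib]
    apply Finset.sum_congr rfl
    intro w _; ring
  rw [e1, hφ, hw.2.2 z.1, hw.2.2 x₀]
  field_simp
  ring
lemma deg_starMesh {V : Type*} [Fintype V] [DecidableEq V] (c : V → V → ℝ)
    (hw : IsWeight c) (x₀ : V) (hd : deg c x₀ ≠ 0) (z : {w : V // w ≠ x₀}) :
    deg (starMesh c x₀) z = deg c z.1 - c z.1 x₀ * c x₀ z.1 / deg c x₀ := by
  have := sum_starMesh c hw x₀ hd z (fun _ => 1) (by simp [deg])
  simpa [deg] using this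
lemma ulap_starMesh {V : Type*} [Fintype V] [DecidableEq V] (c : V → V → ℝ)
    (hw : IsWeight c) (x₀ : V) (hd : deg c x₀ ≠ 0) (z : {w : V // w ≠ x₀}) (φ : V → ℝ)
    (hφ : ∑ w, c x₀ w * φ w = deg c x₀ * φ x₀) :
    ulap (starMesh c x₀) (fun w => φ w.1) z = ulap c φ z.1 := by
  unfold ulap
  rw [sum_starMesh c hw x₀ hd z φ hφ, deg_starMesh c hw x₀ hd z]
  ring
lemma dirichlet_iff_ulap {W : Type*} [Fintype W] [DecidableEq W] (c : W → W → ℝ)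
    (hdeg : ∀ z, 0 < deg c z) (x y : W) (φ : W → ℝ) :
    IsDirichlet c x y φ ↔
      ((∀ z, ulap c φ z = (if z = x then 1 else 0) - (if z = y then 1 else 0)) ∧ φ y = 0) := by
  unfold IsDirichlet
  constructor <;> rintro ⟨h1, h2⟩ <;> refine ⟨fun z => ?_, h2⟩
  · have := h1 z
    rw [lap_eq_ulap c φ z (hdeg z).ne', div_eq_iff (hdeg z).ne'] at this
    rw [this]
    split_ifs with hx hy hy
    · subst hx; rw [hy]; ring
    · subst hx; rw [sub_zero, sub_zero, one_div, inv_mul_cancel₀ (hdeg z).ne']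
    · subst hy; rw [zero_sub, zero_sub, neg_mul, one_div, inv_mul_cancel₀ (hdeg z).ne']
    · ring
  · rw [lap_eq_ulap c φ z (hdeg z).ne', h1 z]
    split_ifs with hx hy hy
    · subst hx; rw [hy]; ring
    · subst hx; rw [sub_zero, sub_zero]
    · subst hy; rw [zero_sub, zero_sub, neg_div]
    · simp
lemma starMesh_weight {V : Type*} [Fintype V] [DecidableEq V] (c : V → V → ℝ)
    (hw : IsWeight c) (x₀ : V) : IsWeight (starMesh c x₀) := by
  have hd0 : 0 ≤ deg c x₀ := Finset.sum_nonneg (fun w _ => hw.1 x₀ w)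
  refine ⟨fun a b => ?_, fun a b => ?_, fun a => ?_⟩
  · unfold starMesh
    split_ifs with h
    · exact le_rfl
    · exact add_nonneg (hw.1 _ _) (div_nonneg (mul_nonneg (hw.1 _ _) (hw.1 _ _)) hd0)
  · unfold starMesh
    rcases eq_or_ne a b with h | h
    · rw [if_pos h, if_pos h.symm]
    · rw [if_neg h, if_neg h.symm, hw.2.1 a.1 b.1, hw.2.1 a.1 x₀, hw.2.1 x₀ b.1]
      ring
  · unfold starMesh; rw [if_pos rfl]
lemma exists_third {V : Type*} [Fintype V] [DecidableEq V] (hcard : 3 ≤ Fintype.card V)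
    (a b : V) : ∃ u, u ≠ a ∧ u ≠ b := by
  have h1 : ({a, b} : Finset V).card ≤ 2 := Finset.card_insert_le a {b} |>.trans (by simp)
  have h2 : 0 < (Finset.univ \ ({a, b} : Finset V)).card := by
    rw [Finset.card_sdiff_of_subset (Finset.subset_univ _), Finset.card_univ]
    omega
  obtain ⟨u, hu⟩ := Finset.card_pos.1 h2
  rw [Finset.mem_sdiff, Finset.mem_insert, Finset.mem_singleton] at hu
  exact ⟨u, fun h => hu.2 (Or.inl h), fun h => hu.2 (Or.inr h)⟩
lemma deg_starMesh_pos {V : Type*} [Fintype V] [DecidableEq V] (c : V → V → ℝ)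
    (hw : IsWeight c) (hconn : Conn c) (hdeg : ∀ x, 0 < deg c x)
    (hcard : 3 ≤ Fintype.card V) (x₀ : V) (z : {w : V // w ≠ x₀}) :
    0 < deg (starMesh c x₀) z := by
  have hd := hdeg x₀
  rw [deg_starMesh c hw x₀ hd.ne' z]
  have hbound : ∀ a b : V, c a b ≤ deg c a := by
    intro a b
    exact Finset.single_le_sum (fun w _ => hw.1 a w) (Finset.mem_univ b)
  have h1 : c x₀ z.1 / deg c x₀ ≤ 1 := (div_le_one hd).2 (hbound x₀ z.1)
  have h2 : c z.1 x₀ * c x₀ z.1 / deg c x₀ ≤ c z.1 x₀ := by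
    rw [mul_div_assoc]
    calc c z.1 x₀ * (c x₀ z.1 / deg c x₀) ≤ c z.1 x₀ * 1 :=
      mul_le_mul_of_nonneg_left h1 (hw.1 _ _)
    _ = c z.1 x₀ := mul_one _
  have h3 : c z.1 x₀ ≤ deg c z.1 := hbound z.1 x₀
  rcases lt_or_eq_of_le (h2.trans h3) with h | h
  · linarith
  -- degenerate case: equality throughout, contradiction with connectivity
  · exfalso
    have e1 : c z.1 x₀ = deg c z.1 := le_antisymm h3 (by linarith)
    have hzx : 0 < c z.1 x₀ := e1 ▸ hdeg z.1
    have e2 : c x₀ z.1 = deg c x₀ := by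
      have : c z.1 x₀ * (c x₀ z.1 / deg c x₀) = c z.1 x₀ * 1 := by
        rw [mul_one, ← mul_div_assoc]; linarith
      have := mul_left_cancel₀ hzx.ne' this
      rw [div_eq_one_iff_eq hd.ne'] at this
      exact this
    -- all other edges from z.1 and from x₀ vanish
    have zero_z : ∀ w, w ≠ x₀ → c z.1 w = 0 := by
      intro w hwne
      have hsum : ∑ u, (c z.1 u - if u = x₀ then c z.1 u else 0) = 0 := by
        rw [Finset.sum_sub_distrib, Finset.sum_ite_eq' Finset.univ x₀ (c z.1)]
        simp only [Finset.mem_univ, if_true]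
        have : ∑ u, c z.1 u = deg c z.1 := rfl
        rw [this, ← e1]; ring
      have hnn : ∀ u ∈ Finset.univ, 0 ≤ c z.1 u - if u = x₀ then c z.1 u else 0 := by
        intro u _
        split_ifs
        · simp
        · simpa using hw.1 z.1 u
      have := (Finset.sum_eq_zero_iff_of_nonneg hnn).1 hsum w (Finset.mem_univ w)
      rw [if_neg hwne] at this
      linarith
    have zero_x : ∀ w, w ≠ z.1 → c x₀ w = 0 := by
      intro w hwne
      have hsum : ∑ u, (c x₀ u - if u = z.1 then c x₀ u else 0) = 0 := by
        rw [Finset.sum_sub_distrib, Finset.sum_ite_eq' Finset.univ z.1 (c x₀)]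
        simp only [Finset.mem_univ, if_true]
        have : ∑ u, c x₀ u = deg c x₀ := rfl
        rw [this, ← e2]; ring
      have hnn : ∀ u ∈ Finset.univ, 0 ≤ c x₀ u - if u = z.1 then c x₀ u else 0 := by
        intro u _
        split_ifs
        · simp
        · simpa using hw.1 x₀ u
      have := (Finset.sum_eq_zero_iff_of_nonneg hnn).1 hsum w (Finset.mem_univ w)
      rw [if_neg hwne] at this
      linarith
    obtain ⟨u, hu1, hu2⟩ := exists_third hcard z.1 x₀
    have trapped : ∀ a, Relation.ReflTransGen (fun p q => 0 < c p q) a z.1 →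
        a = z.1 ∨ a = x₀ := by
      intro a h
      induction h using Relation.ReflTransGen.head_induction_on with
      | refl => exact Or.inl rfl
      | @head p q hab hqz ih =>
        rcases ih with h' | h'
        · rw [h'] at hab
          by_cases hp : p = x₀
          · exact Or.inr hp
          · exfalso
            rw [hw.2.1 p z.1, zero_z p hp] at hab
            exact lt_irrefl 0 hab
        · rw [h'] at hab
          by_cases hp : p = z.1
          · exact Or.inl hp
          · exfalso
            rw [hw.2.1 p x₀, zero_x p hp] at hab
            exact lt_irrefl 0 hab
    rcases trapped u (hconn u z.1) with h | h
    · exact hu1 h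
    · exact hu2 h
lemma conn_starMesh {V : Type*} [Fintype V] [DecidableEq V] (c : V → V → ℝ)
    (hw : IsWeight c) (hconn : Conn c) (hdeg : ∀ x, 0 < deg c x) (x₀ : V) :
    Conn (starMesh c x₀) := by
  intro a b
  have hd := hdeg x₀
  have edge1 : ∀ (p q : {z : V // z ≠ x₀}), p ≠ q → 0 < c p.1 q.1 →
      0 < starMesh c x₀ p q := by
    intro p q hpq h
    unfold starMesh
    rw [if_neg hpq]
    have : 0 ≤ c p.1 x₀ * c x₀ q.1 / deg c x₀ :=
      div_nonneg (mul_nonneg (hw.1 _ _) (hw.1 _ _)) hd.le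
    linarith
  have edge2 : ∀ (p q : {z : V // z ≠ x₀}), p ≠ q → 0 < c p.1 x₀ → 0 < c x₀ q.1 →
      0 < starMesh c x₀ p q := by
    intro p q hpq h1 h2
    unfold starMesh
    rw [if_neg hpq]
    have : 0 < c p.1 x₀ * c x₀ q.1 / deg c x₀ := div_pos (mul_pos h1 h2) hd
    linarith [hw.1 p.1 q.1]
  have key : ∀ a' (h : Relation.ReflTransGen (fun p q => 0 < c p q) a' b.1),
      (∀ ha : a' ≠ x₀,
        Relation.ReflTransGen (fun p q => 0 < starMesh c x₀ p q) ⟨a', ha⟩ b) ∧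
      (a' = x₀ → ∀ u (hu : u ≠ x₀), 0 < c u x₀ →
        Relation.ReflTransGen (fun p q => 0 < starMesh c x₀ p q) ⟨u, hu⟩ b) := by
    intro a' h
    induction h using Relation.ReflTransGen.head_induction_on with
    | refl =>
      refine ⟨fun ha => ?_, fun ha => absurd ha b.2⟩
      have : (⟨b.1, ha⟩ : {z : V // z ≠ x₀}) = b := Subtype.ext rfl
      rw [this]
    | @head p m hab hmb ih =>
      constructor
      · intro ha
        by_cases hm : m = x₀
        · subst hm
          exact ih.2 rfl p ha hab
        · have ihm := ih.1 hm
          by_cases heq : (⟨p, ha⟩ : {z : V // z ≠ x₀}) = ⟨m, hm⟩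
          · rw [heq]; exact ihm
          · exact Relation.ReflTransGen.head (edge1 _ _ heq hab) ihm
      · intro ha' u hu hupos
        rw [ha'] at hab
        have hm : m ≠ x₀ := by
          intro h'
          rw [h', hw.2.2 x₀] at hab
          exact lt_irrefl 0 hab
        have ihm := ih.1 hm
        by_cases heq : (⟨u, hu⟩ : {z : V // z ≠ x₀}) = ⟨m, hm⟩
        · rw [heq]; exact ihm
        · exact Relation.ReflTransGen.head (edge2 _ _ heq hupos hab) ihm
  have := (key a.1 (hconn a.1 b.1)).1 a.2
  have ha : (⟨a.1, a.2⟩ : {z : V // z ≠ x₀}) = a := Subtype.ext rfl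
  rwa [ha] at this

theorem stmt9 {V : Type*} [Fintype V] [DecidableEq V] (c : V → V → ℝ)
    (hw : IsWeight c) (hconn : Conn c) (hdeg : ∀ x, 0 < deg c x)
    (hcard : 3 ≤ Fintype.card V) (x₀ : V) :
    Conn (starMesh c x₀) ∧
      ∀ (R : V → V → ℝ) (R' : {z : V // z ≠ x₀} → {z : V // z ≠ x₀} → ℝ),
        IsEffRes c R → IsEffRes (starMesh c x₀) R' →
        ∀ x y : {z : V // z ≠ x₀}, R' x y = R x.1 y.1 := by
  have hd := hdeg x₀
  have hw' := starMesh_weight c hw x₀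
  have hdeg' := deg_starMesh_pos c hw hconn hdeg hcard x₀
  have hconn' := conn_starMesh c hw hconn hdeg x₀
  refine ⟨hconn', ?_⟩
  intro R R' hR hR' x y
  by_cases hxy : x = y
  · subst hxy
    rw [hR'.1 x, hR.1 x.1]
  · have hxy1 : x.1 ≠ y.1 := fun h => hxy (Subtype.ext h)
    obtain ⟨φ, hφD, hφx⟩ := hR.2 x.1 y.1 hxy1
    obtain ⟨ψ', hψ'D, hψ'x⟩ := hR'.2 x y hxy
    have hchar := (dirichlet_iff_ulap c hdeg x.1 y.1 φ).1 hφD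
    have hx0 : ulap c φ x₀ = 0 := by
      rw [hchar.1 x₀, if_neg (fun h => x.2 h.symm), if_neg (fun h => y.2 h.symm)]
      ring
    have hharm : ∑ w, c x₀ w * φ w = deg c x₀ * φ x₀ := by
      unfold ulap at hx0; linarith
    have hψD : IsDirichlet (starMesh c x₀) x y (fun w => φ w.1) := by
      rw [dirichlet_iff_ulap _ hdeg']
      constructor
      · intro z
        rw [ulap_starMesh c hw x₀ hd.ne' z φ hharm, hchar.1 z.1]
        simp [Subtype.ext_iff]
      · exact hchar.2
    have h1 := dirichlet_unique (starMesh c x₀) hw'.1 hdeg' hconn' hψ'D hψD x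
    rw [← hψ'x, h1]
    exact hφx
end

section
/- Star-mesh transform and vertex weights: with (V,c), x₀ and c' as in the star-mesh transform (c'(x,y) = c(x,y) + c(x,x₀)c(x₀,y)/c_{x₀} for x ≠ y in V \ {x₀}), the vertex weight of any x ∈ V \ {x₀} satisfies c'_x = c_x - c(x₀,x)²/c_{x₀}. In particular c'(x,y) ≥ c(x,y) and c'_x ≤ c_x. -/
theorem stmt10 {V : Type*} [Fintype V] [DecidableEq V] (c : V → V → ℝ)
    (hw : IsWeight c) (x₀ : V) (hdeg : 0 < deg c x₀) :
    ∀ x : {z : V // z ≠ x₀},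
      deg (starMesh c x₀) x = deg c x.1 - c x₀ x.1 ^ 2 / deg c x₀ ∧
      (∀ y : {z : V // z ≠ x₀}, c x.1 y.1 ≤ starMesh c x₀ x y) ∧
      deg (starMesh c x₀) x ≤ deg c x.1 := by
  obtain ⟨hpos, hsymm, hdiag⟩ := hw
  intro x
  have hd : deg c x₀ ≠ 0 := ne_of_gt hdeg
  have hsub : ∀ f : V → ℝ, ∑ b : {z : V // z ≠ x₀}, f b.1 = (∑ b, f b) - f x₀ := by
    intro f
    rw [← Finset.sum_subtype (Finset.univ.erase x₀) (by simp) f,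
      Finset.sum_erase_eq_sub (Finset.mem_univ x₀)]
  have hmain : deg (starMesh c x₀) x = deg c x.1 - c x₀ x.1 ^ 2 / deg c x₀ := by
    have hpt : ∀ b : {z : V // z ≠ x₀}, starMesh c x₀ x b =
        (c x.1 b.1 + c x.1 x₀ * c x₀ b.1 / deg c x₀) -
          (if x = b then c x.1 x₀ * c x₀ x.1 / deg c x₀ else 0) := by
      intro b
      by_cases h : x = b
      · subst h; simp [starMesh, hdiag]
      · simp [starMesh, h]
    have : deg (starMesh c x₀) x =
        (∑ b : {z : V // z ≠ x₀}, (c x.1 b.1 + c x.1 x₀ * c x₀ b.1 / deg c x₀)) -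
          c x.1 x₀ * c x₀ x.1 / deg c x₀ := by
      unfold deg
      simp_rw [hpt, Finset.sum_sub_distrib, Finset.sum_ite_eq, Finset.mem_univ, if_true]; rfl
    rw [this, Finset.sum_add_distrib,
      hsub (fun b => c x.1 b), hsub (fun b => c x.1 x₀ * c x₀ b / deg c x₀)]
    have h1 : ∑ b, c x.1 x₀ * c x₀ b / deg c x₀ = c x.1 x₀ := by
      rw [← Finset.sum_div, ← Finset.mul_sum]
      show c x.1 x₀ * deg c x₀ / deg c x₀ = _
      field_simp
    rw [h1]
    have : ∑ b, c x.1 b = deg c x.1 := rfl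
    rw [this, hdiag, hsymm x.1 x₀]
    ring
  refine ⟨hmain, ?_, ?_⟩
  · intro y
    by_cases h : x = y
    · subst h; simp [starMesh, hdiag]
    · simp only [starMesh, if_neg h]
      have : 0 ≤ c x.1 x₀ * c x₀ y.1 / deg c x₀ :=
        div_nonneg (mul_nonneg (hpos _ _) (hpos _ _)) hdeg.le
      linarith
  · rw [hmain]
    have : 0 ≤ c x₀ x.1 ^ 2 / deg c x₀ := div_nonneg (sq_nonneg _) hdeg.le
    linarith
end

section
/- Let V₁ ⊆ V₂ be finite sets and (V₁,c₁), (V₂,c₂) connected weighted graphs whose effective resistances R₁ and R₂ agree on V₁ × V₁. Then c₁(x,y) ≥ c₂(x,y) and (c₁)_x ≤ (c₂)_x for all x, y ∈ V₁; consequently c₁(x,y)/(c₁)_x ≥ c₂(x,y)/(c₂)_x. -/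
section Laplacian

variable {W : Type*} [Fintype W] {c : W → W → ℝ}

variable (c) in
noncomputable def laplacian : Module.End ℝ (W → ℝ) where
  toFun f x := ∑ y, c x y * (f x - f y)
  map_add' f g := by
    ext x
    simp only [Pi.add_apply, ← Finset.sum_add_distrib]
    exact Finset.sum_congr rfl fun y _ => by ring
  map_smul' r f := by
    ext x
    simp only [Pi.smul_apply, smul_eq_mul, RingHom.id_apply, Finset.mul_sum]
    exact Finset.sum_congr rfl fun y _ => by ring

theorem laplacian_apply (f : W → ℝ) (x : W) :
    laplacian c f x = ∑ y, c x y * (f x - f y) := rfl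

theorem laplacian_apply_eq_deg_mul_sub (f : W → ℝ) (x : W) :
    laplacian c f x = deg c x * f x - c x ⬝ᵥ f := by
  simp only [laplacian_apply, deg, dotProduct, mul_sub, Finset.sum_sub_distrib, Finset.sum_mul]

variable (c) in
theorem laplacian_const (r : ℝ) : laplacian c (fun _ => r) = 0 := by
  ext x
  simp [laplacian_apply]

theorem laplacian_apply_eq_deg_mul_lap (f : W → ℝ) {x : W} (hx : deg c x ≠ 0) :
    laplacian c f x = deg c x * lap c f x := by
  rw [laplacian_apply_eq_deg_mul_sub, lap, mul_sub, Finset.mul_sum, dotProduct]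
  congr 1
  exact Finset.sum_congr rfl fun y _ => by field_simp

theorem le_deg (hnn : ∀ x y, 0 ≤ c x y) (x y : W) : c x y ≤ deg c x :=
  Finset.single_le_sum (fun z _ => hnn x z) (Finset.mem_univ y)

theorem deg_pos [Nontrivial W] (hnn : ∀ x y, 0 ≤ c x y) (hconn : Conn c) (x : W) :
    0 < deg c x := by
  obtain ⟨y, hy⟩ := exists_ne x
  rcases (hconn x y).cases_head with rfl | ⟨z, hxz, -⟩
  · exact absurd rfl hy
  · exact hxz.trans_le (le_deg hnn x z)

theorem two_mul_dotProduct_laplacian (hsymm : ∀ x y, c x y = c y x) (f g : W → ℝ) :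
    2 * (g ⬝ᵥ laplacian c f) = ∑ x, ∑ y, c x y * (f x - f y) * (g x - g y) := by
  have hexpand : g ⬝ᵥ laplacian c f = ∑ x, ∑ y, c x y * (f x - f y) * g x := by
    simp only [dotProduct, laplacian_apply, Finset.mul_sum]
    exact Finset.sum_congr rfl fun x _ => Finset.sum_congr rfl fun y _ => by ring
  have hswap : g ⬝ᵥ laplacian c f = -∑ x, ∑ y, c x y * (f x - f y) * g y := by
    rw [hexpand, Finset.sum_comm, ← Finset.sum_neg_distrib]
    refine Finset.sum_congr rfl fun x _ => ?_
    rw [← Finset.sum_neg_distrib]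
    exact Finset.sum_congr rfl fun y _ => by rw [hsymm]; ring
  calc 2 * (g ⬝ᵥ laplacian c f)
      = (∑ x, ∑ y, c x y * (f x - f y) * g x) - ∑ x, ∑ y, c x y * (f x - f y) * g y := by
        rw [two_mul]; nth_rw 1 [hexpand]; rw [hswap]; ring
    _ = ∑ x, ∑ y, c x y * (f x - f y) * (g x - g y) := by
        rw [← Finset.sum_sub_distrib]
        exact Finset.sum_congr rfl fun x _ => by rw [← Finset.sum_sub_distrib]; simp only [mul_sub]

theorem dotProduct_laplacian_comm (hsymm : ∀ x y, c x y = c y x) (f g : W → ℝ) :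
    g ⬝ᵥ laplacian c f = f ⬝ᵥ laplacian c g := by
  have h := two_mul_dotProduct_laplacian hsymm f g
  have h' := two_mul_dotProduct_laplacian hsymm g f
  have hsum : ∑ x, ∑ y, c x y * (f x - f y) * (g x - g y)
      = ∑ x, ∑ y, c x y * (g x - g y) * (f x - f y) :=
    Finset.sum_congr rfl fun x _ => Finset.sum_congr rfl fun y _ => by ring
  linarith

theorem two_mul_dotProduct_laplacian_self (hsymm : ∀ x y, c x y = c y x) (f : W → ℝ) :
    2 * (f ⬝ᵥ laplacian c f) = ∑ x, ∑ y, c x y * (f x - f y) ^ 2 := by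
  rw [two_mul_dotProduct_laplacian hsymm]
  exact Finset.sum_congr rfl fun x _ => Finset.sum_congr rfl fun y _ => by ring

theorem dotProduct_laplacian_self_nonneg (hnn : ∀ x y, 0 ≤ c x y)
    (hsymm : ∀ x y, c x y = c y x) (f : W → ℝ) : 0 ≤ f ⬝ᵥ laplacian c f := by
  have h := two_mul_dotProduct_laplacian_self hsymm f
  have : 0 ≤ ∑ x, ∑ y, c x y * (f x - f y) ^ 2 :=
    Finset.sum_nonneg fun x _ => Finset.sum_nonneg fun y _ => mul_nonneg (hnn x y) (sq_nonneg _)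
  linarith

theorem dotProduct_laplacian_max_zero_le (hnn : ∀ x y, 0 ≤ c x y)
    (hsymm : ∀ x y, c x y = c y x) (f : W → ℝ) :
    (fun x => max (f x) 0) ⬝ᵥ laplacian c (fun x => max (f x) 0) ≤ f ⬝ᵥ laplacian c f := by
  have h := two_mul_dotProduct_laplacian_self hsymm f
  have h' := two_mul_dotProduct_laplacian_self hsymm (fun x => max (f x) 0)
  have : ∑ x, ∑ y, c x y * (max (f x) 0 - max (f y) 0) ^ 2 ≤ ∑ x, ∑ y, c x y * (f x - f y) ^ 2 :=
    Finset.sum_le_sum fun x _ => Finset.sum_le_sum fun y _ =>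
      mul_le_mul_of_nonneg_left (sq_le_sq.mpr (abs_max_sub_max_le_abs _ _ _)) (hnn x y)
  linarith

theorem eq_of_dotProduct_laplacian_self_eq_zero (hnn : ∀ x y, 0 ≤ c x y)
    (hsymm : ∀ x y, c x y = c y x) (hconn : Conn c) {f : W → ℝ}
    (hf : f ⬝ᵥ laplacian c f = 0) (x y : W) : f x = f y := by
  have hsum : ∑ x, ∑ y, c x y * (f x - f y) ^ 2 = 0 := by
    rw [← two_mul_dotProduct_laplacian_self hsymm, hf, mul_zero]
  have hterm : ∀ a b, c a b * (f a - f b) ^ 2 = 0 := by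
    have hnn' : ∀ a b, 0 ≤ c a b * (f a - f b) ^ 2 := fun a b =>
      mul_nonneg (hnn a b) (sq_nonneg _)
    intro a b
    have hrow := (Finset.sum_eq_zero_iff_of_nonneg fun a _ =>
      Finset.sum_nonneg fun b _ => hnn' a b).mp hsum a (Finset.mem_univ a)
    exact (Finset.sum_eq_zero_iff_of_nonneg fun b _ => hnn' a b).mp hrow b (Finset.mem_univ b)
  have hedge : ∀ a b, 0 < c a b → f a = f b := fun a b hab => by
    have hsq := (mul_eq_zero.mp (hterm a b)).resolve_left hab.ne'
    exact sub_eq_zero.mp (pow_eq_zero_iff two_ne_zero |>.mp hsq)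
  induction hconn x y with
  | refl => rfl
  | tail _ hbc ih => exact ih.trans (hedge _ _ hbc)

end Laplacian

section Potentials

variable {W : Type*} [Fintype W] [DecidableEq W] {c : W → W → ℝ}

theorem laplacian_eq_of_isDirichlet (hnn : ∀ x y, 0 ≤ c x y) (hconn : Conn c) {x y : W}
    (hxy : x ≠ y) {φ : W → ℝ} (hφ : IsDirichlet c x y φ) :
    laplacian c φ = Pi.single x 1 - Pi.single y 1 := by
  have : Nontrivial W := ⟨x, y, hxy⟩
  ext z
  have hz := (deg_pos hnn hconn z).ne'
  rw [laplacian_apply_eq_deg_mul_lap φ hz, hφ.1 z]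
  rcases eq_or_ne z x with rfl | hzx
  · simp [hxy, hz]
  · rcases eq_or_ne z y with rfl | hzy
    · simp [hzx, hz]
    · simp [hzx, hzy]

theorem exists_potentials_of_isEffRes (hnn : ∀ x y, 0 ≤ c x y) (hconn : Conn c)
    {R : W → W → ℝ} (hR : IsEffRes c R) :
    ∃ ψ : W → W → W → ℝ, (∀ a b, laplacian c (ψ a b) = Pi.single a 1 - Pi.single b 1) ∧
      (∀ a b, ψ a b b = 0) ∧ ∀ a b, ψ a b a = R a b := by
  have : ∀ a b, ∃ φ : W → ℝ, laplacian c φ = Pi.single a 1 - Pi.single b 1 ∧ φ b = 0 ∧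
      φ a = R a b := by
    intro a b
    rcases eq_or_ne a b with rfl | hab
    · exact ⟨0, by simp, rfl, (hR.1 a).symm⟩
    · obtain ⟨φ, hφ, hφa⟩ := hR.2 a b hab
      exact ⟨φ, laplacian_eq_of_isDirichlet hnn hconn hab hφ, hφ.2, hφa⟩
  choose ψ hψ hψb hψa using this
  exact ⟨ψ, hψ, hψb, hψa⟩

end Potentials

structure IsAbstractLaplacian {α : Type*} [Fintype α] (A : Module.End ℝ (α → ℝ)) : Prop where
  symm : ∀ f g, g ⬝ᵥ A f = f ⬝ᵥ A g
  map_eq_zero_iff : ∀ f, A f = 0 ↔ ∀ x y, f x = f y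

theorem isAbstractLaplacian_laplacian {W : Type*} [Fintype W] {c : W → W → ℝ}
    (hnn : ∀ x y, 0 ≤ c x y) (hsymm : ∀ x y, c x y = c y x) (hconn : Conn c) :
    IsAbstractLaplacian (laplacian c) where
  symm := dotProduct_laplacian_comm hsymm
  map_eq_zero_iff f := by
    constructor
    · intro hf
      exact eq_of_dotProduct_laplacian_self_eq_zero hnn hsymm hconn (by simp [hf])
    · intro hf
      ext x
      exact Finset.sum_eq_zero fun y _ => by rw [hf x y, sub_self, mul_zero]

namespace IsAbstractLaplacian

variable {α : Type*} [Fintype α] {A : Module.End ℝ (α → ℝ)}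

theorem map_const (hA : IsAbstractLaplacian A) (r : ℝ) : A (fun _ => r) = 0 :=
  (hA.map_eq_zero_iff _).2 fun _ _ => rfl

theorem sum_apply_eq_zero (hA : IsAbstractLaplacian A) (f : α → ℝ) : ∑ x, A f x = 0 := by
  rw [← one_dotProduct, hA.symm, show (1 : α → ℝ) = fun _ => 1 from rfl, hA.map_const,
    dotProduct_zero]

theorem reciprocity [DecidableEq α] (hA : IsAbstractLaplacian A) {ψ φ : α → ℝ} {a b z t : α}
    (hψ : A ψ = Pi.single a 1 - Pi.single b 1) (hφ : A φ = Pi.single z 1 - Pi.single t 1) :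
    ψ z - ψ t = φ a - φ b := by
  have h := hA.symm ψ φ
  simp only [hψ, hφ, dotProduct_sub, dotProduct_single, mul_one] at h
  exact h.symm

/-- `ψ a b a` is the effective resistance between `a` and `b`. -/
theorem potential_eq [DecidableEq α] (hA : IsAbstractLaplacian A) {ψ : α → α → α → ℝ}
    (hψ : ∀ a b, A (ψ a b) = Pi.single a 1 - Pi.single b 1) (hψb : ∀ a b, ψ a b b = 0)
    (z t x : α) : ψ z t x = (ψ x t x + ψ z t z - ψ x z x) / 2 := by
  have hG : A (ψ x z - ψ x t + ψ z t) = 0 := by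
    rw [map_add, map_sub, hψ, hψ, hψ]
    abel
  have hconst := (hA.map_eq_zero_iff _).1 hG x z
  have hrecip := hA.reciprocity (hψ x t) (hψ z t)
  simp only [Pi.add_apply, Pi.sub_apply, hψb] at hconst hrecip
  linarith

theorem eq_of_potentials [DecidableEq α] {A' : Module.End ℝ (α → ℝ)} (hA : IsAbstractLaplacian A)
    (hA' : IsAbstractLaplacian A') {ψ : α → α → α → ℝ}
    (hψ : ∀ a b, A (ψ a b) = Pi.single a 1 - Pi.single b 1)
    (hψ' : ∀ a b, A' (ψ a b) = Pi.single a 1 - Pi.single b 1) : A = A' := by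
  refine LinearMap.ext fun f => funext fun t => ?_
  set g := ∑ a, A f a • ψ a t
  -- `A f` has zero sum, so it is the divergence of the currents `A f a` from `a` to `t`
  have hg : ∀ B : Module.End ℝ (α → ℝ),
      (∀ a b, B (ψ a b) = Pi.single a 1 - Pi.single b 1) → B g = A f := by
    intro B hB
    simp only [g, map_sum, map_smul, hB, smul_sub, Finset.sum_sub_distrib, ← Finset.sum_smul,
      hA.sum_apply_eq_zero, zero_smul, sub_zero]
    ext y
    simp [Pi.single_apply]
  have hconst := (hA.map_eq_zero_iff (f - g)).1 (by rw [map_sub, hg A hψ, sub_self])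
  have hf : f = g + fun _ => (f - g) t := by
    ext y
    have := hconst y t
    simp only [Pi.sub_apply, Pi.add_apply] at this ⊢
    linarith
  rw [hf, map_add, map_add, hA.map_const, hA'.map_const, hg A hψ, hg A' hψ']

theorem eq_of_potential_eq [DecidableEq α] {A' : Module.End ℝ (α → ℝ)} (hA : IsAbstractLaplacian A)
    (hA' : IsAbstractLaplacian A') {ψ ψ' : α → α → α → ℝ}
    (hψ : ∀ a b, A (ψ a b) = Pi.single a 1 - Pi.single b 1) (hψb : ∀ a b, ψ a b b = 0)
    (hψ' : ∀ a b, A' (ψ' a b) = Pi.single a 1 - Pi.single b 1) (hψ'b : ∀ a b, ψ' a b b = 0)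
    (hR : ∀ a b, ψ a b a = ψ' a b a) : A = A' := by
  have : ψ = ψ' := by
    ext z t x
    rw [hA.potential_eq hψ hψb, hA'.potential_eq hψ' hψ'b, hR, hR, hR]
  subst this
  exact hA.eq_of_potentials hA' hψ hψ'

end IsAbstractLaplacian

section Trace

variable {V : Type*} [Fintype V] [DecidableEq V] {c : V → V → ℝ} {s : Finset V}

variable (c s) in
noncomputable def dirichletOp : Module.End ℝ (V → ℝ) where
  toFun F z := if z ∈ s then F z else laplacian c F z
  map_add' F G := by
    ext z
    by_cases hz : z ∈ s <;> simp [hz]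
  map_smul' r F := by
    ext z
    by_cases hz : z ∈ s <;> simp [hz]

variable (c s) in
/-- Junk value `0` when `dirichletOp c s` is not invertible. -/
noncomputable def harmonicExt : (s → ℝ) →ₗ[ℝ] (V → ℝ) :=
  Ring.inverse (dirichletOp c s) ∘ₗ Function.ExtendByZero.linearMap ℝ Subtype.val

variable (c s) in
/-- The Schur complement of the `V \ s` block of `laplacian c`: the Laplacian of the network on `s`
obtained by eliminating the vertices outside `s` with star-mesh transforms. -/
noncomputable def traceLaplacian : Module.End ℝ (s → ℝ) :=
  LinearMap.funLeft ℝ ℝ Subtype.val ∘ₗ laplacian c ∘ₗ harmonicExt c s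

theorem traceLaplacian_apply (f : s → ℝ) (x : s) :
    traceLaplacian c s f x = laplacian c (harmonicExt c s f) x := rfl

theorem isUnit_dirichletOp (hnn : ∀ x y, 0 ≤ c x y) (hsymm : ∀ x y, c x y = c y x)
    (hconn : Conn c) (hne : s.Nonempty) : IsUnit (dirichletOp c s) := by
  rw [LinearMap.isUnit_iff_ker_eq_bot, LinearMap.ker_eq_bot']
  intro F hF
  have hF' : ∀ z, F z = 0 ∨ laplacian c F z = 0 := fun z => by
    have := congrFun hF z
    by_cases hz : z ∈ s <;> simp_all [dirichletOp]
  have hE : F ⬝ᵥ laplacian c F = 0 :=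
    Finset.sum_eq_zero fun z _ => by rcases hF' z with h | h <;> simp [h]
  obtain ⟨x₀, hx₀⟩ := hne
  ext z
  have hx₀' : F x₀ = 0 := by simpa [dirichletOp, hx₀] using congrFun hF x₀
  rw [eq_of_dotProduct_laplacian_self_eq_zero hnn hsymm hconn hE z x₀, hx₀', Pi.zero_apply]

theorem eq_of_dirichletOp (hD : IsUnit (dirichletOp c s)) {F G : V → ℝ}
    (hs : ∀ z ∈ s, F z = G z) (hh : ∀ z ∉ s, laplacian c F z = laplacian c G z) : F = G := by
  refine ((Module.End.isUnit_iff _).1 hD).1 (funext fun z => ?_)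
  by_cases hz : z ∈ s <;> simp [dirichletOp, hz, hs, hh]

theorem dirichletOp_harmonicExt (hD : IsUnit (dirichletOp c s)) (f : s → ℝ) :
    dirichletOp c s (harmonicExt c s f) = Function.extend Subtype.val f 0 := by
  rw [harmonicExt, LinearMap.comp_apply, ← Module.End.mul_apply, Ring.mul_inverse_cancel _ hD]
  rfl

theorem harmonicExt_apply_coe (hD : IsUnit (dirichletOp c s)) (f : s → ℝ) (x : s) :
    harmonicExt c s f x = f x := by
  have := congrFun (dirichletOp_harmonicExt hD f) x
  simpa [dirichletOp, Subtype.val_injective.extend_apply] using this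

theorem laplacian_harmonicExt_of_notMem (hD : IsUnit (dirichletOp c s)) (f : s → ℝ) {z : V}
    (hz : z ∉ s) : laplacian c (harmonicExt c s f) z = 0 := by
  have := congrFun (dirichletOp_harmonicExt hD f) z
  rw [Function.extend_apply' _ _ _ (by rintro ⟨x, rfl⟩; exact hz x.2)] at this
  simpa [dirichletOp, hz] using this

theorem harmonicExt_restrict (hD : IsUnit (dirichletOp c s)) {F : V → ℝ}
    (hF : ∀ z ∉ s, laplacian c F z = 0) : harmonicExt c s (fun x => F x) = F :=
  eq_of_dirichletOp hD (fun z hz => harmonicExt_apply_coe hD _ ⟨z, hz⟩)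
    (fun z hz => by rw [laplacian_harmonicExt_of_notMem hD _ hz, hF z hz])

theorem traceLaplacian_restrict (hD : IsUnit (dirichletOp c s)) {F : V → ℝ}
    (hF : ∀ z ∉ s, laplacian c F z = 0) :
    traceLaplacian c s (fun x => F x) = fun x : s => laplacian c F x := by
  ext x
  rw [traceLaplacian_apply, harmonicExt_restrict hD hF]

theorem dotProduct_traceLaplacian (hD : IsUnit (dirichletOp c s)) (f g : s → ℝ) :
    g ⬝ᵥ traceLaplacian c s f = harmonicExt c s g ⬝ᵥ laplacian c (harmonicExt c s f) := by
  rw [dotProduct, dotProduct, ← Finset.sum_subset (Finset.subset_univ s)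
    fun z _ hz => by rw [laplacian_harmonicExt_of_notMem hD f hz, mul_zero],
    ← Finset.sum_coe_sort s]
  simp only [traceLaplacian_apply, harmonicExt_apply_coe hD]

/-- Maximum principle: truncation at `0` does not increase the energy, and the negative part of a
harmonic extension vanishes on `s`, hence is energy-orthogonal to it; so it has zero energy. -/
theorem harmonicExt_nonneg (hnn : ∀ x y, 0 ≤ c x y) (hsymm : ∀ x y, c x y = c y x)
    (hconn : Conn c) (hD : IsUnit (dirichletOp c s)) {f : s → ℝ} (hf : 0 ≤ f) :
    0 ≤ harmonicExt c s f := by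
  set h := harmonicExt c s f
  set g : V → ℝ := (fun z => max (h z) 0) - h
  have hgs : ∀ z ∈ s, g z = 0 := fun z hz => by
    have hfz : (0 : ℝ) ≤ f ⟨z, hz⟩ := hf _
    simp [g, h, harmonicExt_apply_coe hD f ⟨z, hz⟩, hfz]
  have hgh : g ⬝ᵥ laplacian c h = 0 := Finset.sum_eq_zero fun z _ => by
    by_cases hz : z ∈ s
    · rw [hgs z hz, zero_mul]
    · rw [laplacian_harmonicExt_of_notMem hD f hz, mul_zero]
  have hgg : g ⬝ᵥ laplacian c g = 0 := by
    have hle := dotProduct_laplacian_max_zero_le hnn hsymm h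
    rw [show (fun z => max (h z) 0) = h + g by simp [g]] at hle
    simp only [map_add, add_dotProduct, dotProduct_add] at hle
    rw [dotProduct_laplacian_comm hsymm g h, hgh] at hle
    linarith [dotProduct_laplacian_self_nonneg hnn hsymm g]
  have hg : g = 0 := by
    have hconst := eq_of_dotProduct_laplacian_self_eq_zero hnn hsymm hconn hgg
    refine eq_of_dirichletOp hD hgs fun z _ => ?_
    rw [map_zero, Pi.zero_apply, laplacian_apply]
    exact Finset.sum_eq_zero fun y _ => by rw [hconst z y, sub_self, mul_zero]
  intro z
  have := congrFun hg z
  simp only [g, Pi.sub_apply, Pi.zero_apply, sub_eq_zero] at this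
  exact this ▸ le_max_right _ _

theorem isAbstractLaplacian_traceLaplacian (hnn : ∀ x y, 0 ≤ c x y)
    (hsymm : ∀ x y, c x y = c y x) (hconn : Conn c) (hD : IsUnit (dirichletOp c s)) :
    IsAbstractLaplacian (traceLaplacian c s) where
  symm f g := by
    rw [dotProduct_traceLaplacian hD, dotProduct_traceLaplacian hD, dotProduct_laplacian_comm hsymm]
  map_eq_zero_iff f := by
    constructor
    · intro hf x y
      have hE : harmonicExt c s f ⬝ᵥ laplacian c (harmonicExt c s f) = 0 := by
        rw [← dotProduct_traceLaplacian hD, hf, dotProduct_zero]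
      rw [← harmonicExt_apply_coe hD f x, ← harmonicExt_apply_coe hD f y]
      exact eq_of_dotProduct_laplacian_self_eq_zero hnn hsymm hconn hE _ _
    · intro hf
      ext x
      have hfx : f = fun y : s => (fun _ : V => f x) y := funext fun y => hf y x
      rw [hfx, traceLaplacian_restrict (F := fun _ => f x) hD
        fun z _ => by rw [laplacian_const, Pi.zero_apply], laplacian_const]
      rfl

end Trace

section Comparison

variable {V : Type*} [Fintype V] [DecidableEq V] {s : Finset V} {c₁ : s → s → ℝ}
  {c : V → V → ℝ}

theorem laplacian_eq_traceLaplacian_of_isEffRes (hnn₁ : ∀ x y, 0 ≤ c₁ x y)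
    (hsymm₁ : ∀ x y, c₁ x y = c₁ y x) (hconn₁ : Conn c₁) (hnn : ∀ x y, 0 ≤ c x y)
    (hsymm : ∀ x y, c x y = c y x) (hconn : Conn c) (hne : s.Nonempty)
    {R₁ : s → s → ℝ} {R : V → V → ℝ} (h₁ : IsEffRes c₁ R₁) (h : IsEffRes c R)
    (hagree : ∀ x y : s, R₁ x y = R x y) : laplacian c₁ = traceLaplacian c s := by
  obtain ⟨ψ₁, hψ₁, hψ₁b, hR₁⟩ := exists_potentials_of_isEffRes hnn₁ hconn₁ h₁
  obtain ⟨ψ, hψ, hψb, hR⟩ := exists_potentials_of_isEffRes hnn hconn h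
  have hD := isUnit_dirichletOp hnn hsymm hconn hne
  refine (isAbstractLaplacian_laplacian hnn₁ hsymm₁ hconn₁).eq_of_potential_eq
    (isAbstractLaplacian_traceLaplacian hnn hsymm hconn hD) (ψ' := fun a b x => ψ a b x)
    hψ₁ hψ₁b (fun a b => ?_) (fun a b => hψb a b) (fun a b => by rw [hR₁, hagree, hR])
  have hharm : ∀ z ∉ s, laplacian c (ψ a b) z = 0 := fun z hz => by
    simp [hψ, show z ≠ a from fun h => hz (h ▸ a.2),
      show z ≠ b from fun h => hz (h ▸ b.2)]
  rw [traceLaplacian_restrict hD hharm, hψ]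
  ext x
  simp [Pi.single_apply]

theorem deg_mul_single_sub_eq_of_laplacian_eq_traceLaplacian (hD : IsUnit (dirichletOp c s))
    (hL : laplacian c₁ = traceLaplacian c s) (x y : s) :
    deg c₁ x * (Pi.single y 1 : s → ℝ) x - c₁ x y
      = deg c x * (Pi.single y 1 : s → ℝ) x - c x ⬝ᵥ harmonicExt c s (Pi.single y 1) := by
  have := congrFun (LinearMap.congr_fun hL (Pi.single y 1)) x
  rwa [laplacian_apply_eq_deg_mul_sub, dotProduct_single, mul_one, traceLaplacian_apply,
    laplacian_apply_eq_deg_mul_sub, harmonicExt_apply_coe hD] at this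

theorem le_of_laplacian_eq_traceLaplacian (hnn : ∀ x y, 0 ≤ c x y)
    (hsymm : ∀ x y, c x y = c y x) (hconn : Conn c) (hne : s.Nonempty)
    (hL : laplacian c₁ = traceLaplacian c s) {x y : s} (hxy : x ≠ y) : c x y ≤ c₁ x y := by
  have hD := isUnit_dirichletOp hnn hsymm hconn hne
  have hpos : 0 ≤ harmonicExt c s (Pi.single y 1) :=
    harmonicExt_nonneg hnn hsymm hconn hD (Pi.single_nonneg.2 zero_le_one)
  have heq := deg_mul_single_sub_eq_of_laplacian_eq_traceLaplacian hD hL x y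
  rw [Pi.single_eq_of_ne hxy, mul_zero, zero_sub, mul_zero, zero_sub, neg_inj] at heq
  calc c x y = c x y * harmonicExt c s (Pi.single y 1) y := by
        rw [harmonicExt_apply_coe hD, Pi.single_eq_same, mul_one]
    _ ≤ c x ⬝ᵥ harmonicExt c s (Pi.single y 1) :=
        Finset.single_le_sum (fun z _ => mul_nonneg (hnn x z) (hpos z)) (Finset.mem_univ (y : V))
    _ = c₁ x y := heq.symm

theorem deg_le_of_laplacian_eq_traceLaplacian (hnn : ∀ x y, 0 ≤ c x y)
    (hsymm : ∀ x y, c x y = c y x) (hconn : Conn c) (hne : s.Nonempty)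
    (hL : laplacian c₁ = traceLaplacian c s) {x : s} (hx : c₁ x x = 0) : deg c₁ x ≤ deg c x := by
  have hD := isUnit_dirichletOp hnn hsymm hconn hne
  have hpos := harmonicExt_nonneg hnn hsymm hconn hD
    (Pi.single_nonneg.2 zero_le_one : (0 : s → ℝ) ≤ Pi.single x 1)
  have heq := deg_mul_single_sub_eq_of_laplacian_eq_traceLaplacian hD hL x x
  rw [Pi.single_eq_same, mul_one, mul_one, hx, sub_zero] at heq
  linarith [dotProduct_nonneg_of_nonneg (fun z => hnn x z) hpos]

end Comparison

theorem div_le_div_of_le_of_le_of_le {a b d e : ℝ} (ha : 0 ≤ a) (hab : a ≤ b) (hbd : b ≤ d)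
    (hde : d ≤ e) : a / e ≤ b / d := by
  rcases (ha.trans (hab.trans hbd)).eq_or_lt with hd | hd
  · have hb : b = 0 := le_antisymm (hd ▸ hbd) (ha.trans hab)
    rw [← hd, hb, le_antisymm (hb ▸ hab) ha, zero_div, zero_div]
  · exact div_le_div₀ (ha.trans hab) hab hd hde

theorem stmt11 {V₂ : Type*} [Fintype V₂] [DecidableEq V₂] (V₁ : Finset V₂)
    (c₁ : ↥V₁ → ↥V₁ → ℝ) (c₂ : V₂ → V₂ → ℝ)
    (hw₁ : IsWeight c₁) (hw₂ : IsWeight c₂)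
    (hconn₁ : Conn c₁) (hconn₂ : Conn c₂)
    (R₁ : ↥V₁ → ↥V₁ → ℝ) (R₂ : V₂ → V₂ → ℝ)
    (h₁ : IsEffRes c₁ R₁) (h₂ : IsEffRes c₂ R₂)
    (hagree : ∀ x y : ↥V₁, R₁ x y = R₂ x.1 y.1) :
    ∀ x y : ↥V₁,
      c₂ x.1 y.1 ≤ c₁ x y ∧
      deg c₁ x ≤ deg c₂ x.1 ∧
      c₂ x.1 y.1 / deg c₂ x.1 ≤ c₁ x y / deg c₁ x := by
  obtain ⟨hnn₁, hsymm₁, hdiag₁⟩ := hw₁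
  obtain ⟨hnn₂, hsymm₂, hdiag₂⟩ := hw₂
  intro x y
  have hne : V₁.Nonempty := ⟨x, x.2⟩
  have hL := laplacian_eq_traceLaplacian_of_isEffRes hnn₁ hsymm₁ hconn₁ hnn₂ hsymm₂ hconn₂ hne
    h₁ h₂ hagree
  have hc : c₂ x y ≤ c₁ x y := by
    rcases eq_or_ne x y with rfl | hxy
    · rw [hdiag₁, hdiag₂]
    · exact le_of_laplacian_eq_traceLaplacian hnn₂ hsymm₂ hconn₂ hne hL hxy
  have hdeg := deg_le_of_laplacian_eq_traceLaplacian hnn₂ hsymm₂ hconn₂ hne hL (hdiag₁ x)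
  exact ⟨hc, hdeg, div_le_div_of_le_of_le_of_le (hnn₂ _ _) hc (le_deg hnn₁ x y) hdeg⟩
end

section
/- Suppose (V,d) is a finite metric space that is the effective resistance of a weighted graph G = (V,c). Then for each y ∈ V the vector c(·,y) solves A_y · c(·,y) = b_y, where A_y(x,z) = 1 if x = y = z and (d(x,y)+d(y,z)-d(x,z))/2 otherwise, and b_y(x) = 1 - δ_y(x). -/
lemma Bsymm {V : Type*} [Fintype V] [DecidableEq V] (c : V → V → ℝ)
    (hw : IsWeight c) (hdeg : ∀ x, 0 < deg c x) (φ ψ : V → ℝ) :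
    ∑ z, deg c z * φ z * lap c ψ z = ∑ z, deg c z * ψ z * lap c φ z := by
  have expand : ∀ f g : V → ℝ, ∑ z, deg c z * f z * lap c g z
      = ∑ z, deg c z * f z * g z - ∑ z, ∑ w, f z * (c z w * g w) := by
    intro f g
    rw [← Finset.sum_sub_distrib]
    refine Finset.sum_congr rfl fun z _ => ?_
    unfold lap
    rw [mul_sub, Finset.mul_sum]
    congr 1
    refine Finset.sum_congr rfl fun w _ => ?_
    have := (hdeg z).ne'
    field_simp
  rw [expand, expand]
  have h1 : ∑ z, deg c z * φ z * ψ z = ∑ z, deg c z * ψ z * φ z := by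
    refine Finset.sum_congr rfl fun z _ => by ring
  have h2 : ∑ z, ∑ w, φ z * (c z w * ψ w) = ∑ z, ∑ w, ψ z * (c z w * φ w) := by
    rw [Finset.sum_comm]
    refine Finset.sum_congr rfl fun z _ => Finset.sum_congr rfl fun w _ => ?_
    rw [hw.2.1 w z]; ring
  rw [h1, h2]

lemma Bval {V : Type*} [Fintype V] [DecidableEq V] (c : V → V → ℝ)
    (hdeg : ∀ x, 0 < deg c x) {x y : V} {φ : V → ℝ}
    (hφ : IsDirichlet c x y φ) (ψ : V → ℝ) :
    ∑ z, deg c z * ψ z * lap c φ z = ψ x - ψ y := by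
  have : ∀ z, deg c z * ψ z * lap c φ z
      = (if z = x then deg c z * ψ z * (1 / deg c x) else 0)
        - (if z = y then deg c z * ψ z * (1 / deg c y) else 0) := by
    intro z
    rw [hφ.1 z, mul_sub]
    congr 1 <;> split <;> simp
  simp only [this, Finset.sum_sub_distrib, Finset.sum_ite_eq', Finset.mem_univ, if_true]
  have hx := (hdeg x).ne'
  have hy := (hdeg y).ne'
  field_simp


lemma phiformula {V : Type*} [Fintype V] [DecidableEq V] (d : V → V → ℝ) (hd : IsMetric d)
    (c : V → V → ℝ) (hw : IsWeight c) (hdeg : ∀ x, 0 < deg c x)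
    (heff : IsEffRes c d) {x y : V} (hxy : x ≠ y) {φ : V → ℝ}
    (hφ : IsDirichlet c x y φ) (hφx : φ x = d x y) (z : V) :
    φ z = (d x y + d y z - d x z) / 2 := by
  rcases eq_or_ne z y with rfl | hzy
  · rw [hφ.2, heff.1]; ring
  rcases eq_or_ne z x with rfl | hzx
  · rw [hφx, heff.1, hd.2.2.1 y]; ring
  obtain ⟨φxz, hφxz, hφxzx⟩ := heff.2 x z (Ne.symm hzx)
  obtain ⟨φyz, hφyz, hφyzy⟩ := heff.2 y z (Ne.symm hzy)
  have E1 : d x z - φxz y = d x y - φ z := by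
    have h := Bsymm c hw hdeg φxz φ
    rw [Bval c hdeg hφ φxz, Bval c hdeg hφxz φ, hφxzx, hφx] at h
    linarith
  have E2 : φyz x - d y z = - φ z := by
    have h := Bsymm c hw hdeg φyz φ
    rw [Bval c hdeg hφ φyz, Bval c hdeg hφyz φ, hφyzy, hφ.2] at h
    linarith
  have E3 : φyz x = φxz y := by
    have h := Bsymm c hw hdeg φyz φxz
    rw [Bval c hdeg hφxz φyz, Bval c hdeg hφyz φxz, hφyz.2, hφxz.2] at h
    linarith
  linarith

theorem stmt12 {V : Type*} [Fintype V] [DecidableEq V] (d : V → V → ℝ) (hd : IsMetric d)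
    (c : V → V → ℝ) (hw : IsWeight c) (hconn : Conn c) (hdeg : ∀ x, 0 < deg c x)
    (heff : IsEffRes c d) :
    ∀ y : V, (Amat d y).mulVec (fun z => c z y) = bvec y := by
  intro y
  funext x
  unfold Matrix.mulVec dotProduct Amat bvec
  simp only [Matrix.of_apply]
  rcases eq_or_ne x y with rfl | hxy
  · rw [if_pos rfl]
    refine Finset.sum_eq_zero fun z _ => ?_
    rcases eq_or_ne z x with rfl | hzx
    · simp [hw.2.2]
    · rw [if_neg (by tauto), heff.1]
      ring
  · rw [if_neg hxy]
    obtain ⟨φ, hφ, hφx⟩ := heff.2 x y hxy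
    have hform := phiformula d hd c hw hdeg heff hxy hφ hφx
    have hsum : ∑ z, (c y z / deg c y) * φ z = 1 / deg c y := by
      have h := hφ.1 y
      unfold lap at h
      rw [if_neg (Ne.symm hxy), if_pos rfl, hφ.2] at h
      linarith
    have hdy := (hdeg y).ne'
    calc ∑ z, (if x = y ∧ z = y then 1 else (d x y + d y z - d x z) / 2) * c z y
        = ∑ z, deg c y * ((c y z / deg c y) * φ z) := by
          refine Finset.sum_congr rfl fun z _ => ?_
          rw [if_neg (by tauto), ← hform z, hw.2.1 z y]
          field_simp
      _ = 1 := by rw [← Finset.mul_sum, hsum]; field_simp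
end

section
/- Uniqueness of the realizing graph: if two finite connected weighted graphs (V,c₁) and (V,c₂) on the same vertex set have equal effective resistances, then c₁ = c₂. -/
/-! ### Auxiliary lemmas -/

section Aux

variable {W : Type*} [Fintype W]

lemma lap_sub' (c : W → W → ℝ) (f g : W → ℝ) (z : W) :
    lap c (fun w => f w - g w) z = lap c f z - lap c g z := by
  unfold lap
  simp only [mul_sub, Finset.sum_sub_distrib]
  ring

lemma lap_add' (c : W → W → ℝ) (f g : W → ℝ) (z : W) :
    lap c (fun w => f w + g w) z = lap c f z + lap c g z := by
  unfold lap
  simp only [mul_add, Finset.sum_add_distrib]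
  ring

lemma lap_const_of_zero (c : W → W → ℝ) (hw : IsWeight c)
    (hconn : Conn c) (hdeg : ∀ x, 0 < deg c x) (f : W → ℝ)
    (h : ∀ z, lap c f z = 0) : ∀ a b, f a = f b := by
  intro a b
  obtain ⟨m, -, hm⟩ := Finset.exists_max_image Finset.univ f ⟨a, Finset.mem_univ a⟩
  suffices H : ∀ w, f w = f m by rw [H a, H b]
  intro w
  induction hconn m w with
  | refl => rfl
  | tail hmp hpq ih =>
    rename_i p q
    have hsum1 : ∑ y, c p y / deg c p = 1 := by
      rw [← Finset.sum_div]
      exact div_self (ne_of_gt (hdeg p))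
    have hfp : f p = ∑ y, (c p y / deg c p) * f y := by
      have := h p; unfold lap at this; linarith
    have hzero : ∑ y, (c p y / deg c p) * (f m - f y) = 0 := by
      simp only [mul_sub, Finset.sum_sub_distrib, ← Finset.sum_mul, hsum1]
      rw [← hfp, ih]; ring
    have hnn : ∀ y ∈ Finset.univ, 0 ≤ (c p y / deg c p) * (f m - f y) := by
      intro y _
      exact mul_nonneg (div_nonneg (hw.1 p y) (le_of_lt (hdeg p)))
        (sub_nonneg.mpr (hm y (Finset.mem_univ y)))
    have := (Finset.sum_eq_zero_iff_of_nonneg hnn).mp hzero q (Finset.mem_univ q)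
    have hpos : 0 < c p q / deg c p := div_pos hpq (hdeg p)
    have := (mul_eq_zero.mp this).resolve_left (ne_of_gt hpos)
    linarith

lemma dform_expand (c : W → W → ℝ) (hdeg : ∀ x, 0 < deg c x)
    (f g : W → ℝ) :
    ∑ z, deg c z * g z * lap c f z
      = ∑ z, deg c z * g z * f z - ∑ z, ∑ y, c z y * g z * f y := by
  unfold lap
  rw [← Finset.sum_sub_distrib]
  refine Finset.sum_congr rfl fun z _ => ?_
  rw [mul_sub]
  congr 1
  rw [Finset.mul_sum]
  refine Finset.sum_congr rfl fun y _ => ?_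
  field_simp [ne_of_gt (hdeg z)]

lemma dform_symm (c : W → W → ℝ) (hw : IsWeight c)
    (hdeg : ∀ x, 0 < deg c x) (f g : W → ℝ) :
    ∑ z, deg c z * g z * lap c f z = ∑ z, deg c z * f z * lap c g z := by
  rw [dform_expand c hdeg f g, dform_expand c hdeg g f]
  have h1 : ∑ z, deg c z * g z * f z = ∑ z, deg c z * f z * g z :=
    Finset.sum_congr rfl fun z _ => by ring
  have h2 : ∑ z, ∑ y, c z y * g z * f y = ∑ z, ∑ y, c z y * f z * g y := by
    rw [Finset.sum_comm]
    refine Finset.sum_congr rfl fun z _ => Finset.sum_congr rfl fun y _ => ?_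
    rw [hw.2.1 y z]; ring
  rw [h1, h2]

lemma dform_dirichlet [DecidableEq W] (c : W → W → ℝ)
    (hdeg : ∀ x, 0 < deg c x) {x y : W} {φ : W → ℝ} (hφ : IsDirichlet c x y φ)
    (g : W → ℝ) :
    ∑ z, deg c z * g z * lap c φ z = g x - g y := by
  have : ∀ z, deg c z * g z * lap c φ z
      = (if z = x then deg c z * g z * (1 / deg c x) else 0)
        - (if z = y then deg c z * g z * (1 / deg c y) else 0) := by
    intro z
    rw [hφ.1 z, mul_sub]
    congr 1 <;> split <;> simp
  simp only [this, Finset.sum_sub_distrib, Finset.sum_ite_eq', Finset.mem_univ, if_true]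
  field_simp [ne_of_gt (hdeg x), ne_of_gt (hdeg y)]

lemma recip [DecidableEq W] (c : W → W → ℝ) (hw : IsWeight c)
    (hdeg : ∀ x, 0 < deg c x) {x y a b : W} {φ ψ : W → ℝ}
    (hφ : IsDirichlet c x y φ) (hψ : IsDirichlet c a b ψ) :
    ψ x - ψ y = φ a - φ b := by
  rw [← dform_dirichlet c hdeg hφ ψ, dform_symm c hw hdeg φ ψ,
    dform_dirichlet c hdeg hψ φ]

lemma dir_unique [DecidableEq W] (c : W → W → ℝ) (hw : IsWeight c) (hconn : Conn c)
    (hdeg : ∀ x, 0 < deg c x) {x y : W} {φ ψ : W → ℝ}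
    (hφ : IsDirichlet c x y φ) (hψ : IsDirichlet c x y ψ) : φ = ψ := by
  have hl : ∀ z, lap c (fun w => φ w - ψ w) z = 0 := by
    intro z
    rw [lap_sub', hφ.1 z, hψ.1 z]; ring
  have := lap_const_of_zero c hw hconn hdeg _ hl
  funext z
  have h1 := this z y
  simp only [hφ.2, hψ.2, sub_zero] at h1
  linarith

lemma R_symm [DecidableEq W] (c : W → W → ℝ) (hw : IsWeight c) (hconn : Conn c)
    (hdeg : ∀ x, 0 < deg c x) {R : W → W → ℝ} (hR : IsEffRes c R) :
    ∀ x y, R x y = R y x := by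
  intro x y
  by_cases hxy : x = y
  · rw [hxy]
  obtain ⟨φ, hφ, hφx⟩ := hR.2 x y hxy
  obtain ⟨ψ, hψ, hψy⟩ := hR.2 y x (Ne.symm hxy)
  have hl : ∀ z, lap c (fun w => φ w + ψ w) z = 0 := by
    intro z
    rw [lap_add', hφ.1 z, hψ.1 z]; ring
  have := lap_const_of_zero c hw hconn hdeg _ hl x y
  simp only [hφ.2, hψ.2] at this
  linarith [hφx, hψy, this]

lemma dir_val [DecidableEq W] (c : W → W → ℝ) (hw : IsWeight c) (hconn : Conn c)
    (hdeg : ∀ x, 0 < deg c x) {R : W → W → ℝ} (hR : IsEffRes c R) {x y : W} (hxy : x ≠ y)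
    {φ : W → ℝ} (hφ : IsDirichlet c x y φ) :
    ∀ z, φ z = (R x y + R z y - R z x) / 2 := by
  have val : ∀ {a b : W}, a ≠ b → ∀ {ψ : W → ℝ}, IsDirichlet c a b ψ → ψ a = R a b := by
    intro a b hab ψ hψ
    obtain ⟨ψ', hψ', hval⟩ := hR.2 a b hab
    rw [dir_unique c hw hconn hdeg hψ hψ']
    exact hval
  intro z
  by_cases hzx : z = x
  · subst hzx
    rw [val hxy hφ, hR.1 z, R_symm c hw hconn hdeg hR z y]
    ring
  by_cases hzy : z = y
  · subst hzy
    rw [hφ.2, hR.1 z, R_symm c hw hconn hdeg hR z x]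
    ring
  obtain ⟨φzy, hφzy, hφzyval⟩ := hR.2 z y hzy
  obtain ⟨φzx, hφzx, hφzxval⟩ := hR.2 z x hzx
  have i := recip c hw hdeg hφ hφzy    -- φzy x - φzy y = φ z - φ y
  have ii := recip c hw hdeg hφ hφzx   -- φzx x - φzx y = φ z - φ x
  have iii := recip c hw hdeg hφzx hφzy -- φzy z - φzy x = φzx z - φzx y
  rw [hφzy.2, hφ.2] at i
  rw [hφzx.2, val hxy hφ] at ii
  rw [hφzyval, hφzxval] at iii
  linarith

noncomputable def Lm (c : W → W → ℝ) (f : W → ℝ) (z : W) : ℝ :=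
  deg c z * f z - ∑ y, c z y * f y

lemma Lm_eq_lap (c : W → W → ℝ) (f : W → ℝ) (z : W) (h : deg c z ≠ 0) :
    Lm c f z = deg c z * lap c f z := by
  unfold Lm lap
  rw [mul_sub, Finset.mul_sum]
  congr 1
  refine Finset.sum_congr rfl fun y _ => ?_
  field_simp

lemma Lm_dirichlet [DecidableEq W] (c : W → W → ℝ)
    (hdeg : ∀ x, 0 < deg c x) {x y : W} {φ : W → ℝ} (hφ : IsDirichlet c x y φ)
    (z : W) :
    Lm c φ z = (if z = x then (1:ℝ) else 0) - (if z = y then (1:ℝ) else 0) := by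
  rw [Lm_eq_lap c φ z (ne_of_gt (hdeg z)), hφ.1 z, mul_sub]
  congr 1 <;> split
  · rename_i h; subst h
    rw [mul_one_div, div_self (ne_of_gt (hdeg z))]
  · simp
  · rename_i h; subst h
    rw [mul_one_div, div_self (ne_of_gt (hdeg z))]
  · simp

lemma Lm_sum (c : W → W → ℝ) (A : Finset W) (a : W → ℝ) (g : W → W → ℝ) (z : W) :
    Lm c (fun w => ∑ x ∈ A, a x * g x w) z = ∑ x ∈ A, a x * Lm c (g x) z := by
  unfold Lm
  rw [Finset.mul_sum]
  have h : ∑ y, c z y * ∑ x ∈ A, a x * g x y = ∑ x ∈ A, ∑ y, c z y * (a x * g x y) := by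
    simp_rw [Finset.mul_sum]
    rw [Finset.sum_comm]
  rw [h, ← Finset.sum_sub_distrib]
  refine Finset.sum_congr rfl fun x _ => ?_
  rw [mul_sub, Finset.mul_sum]
  congr 1
  · ring
  · exact Finset.sum_congr rfl fun y _ => by ring

lemma Lm_sumzero (c : W → W → ℝ) (hw : IsWeight c) (f : W → ℝ) :
    ∑ z, Lm c f z = 0 := by
  unfold Lm
  rw [Finset.sum_sub_distrib]
  have h : ∑ z, ∑ y, c z y * f y = ∑ z, deg c z * f z := by
    rw [Finset.sum_comm]
    refine Finset.sum_congr rfl fun y _ => ?_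
    rw [← Finset.sum_mul]
    congr 1
    exact Finset.sum_congr rfl fun z _ => hw.2.1 z y
  rw [h, sub_self]

lemma Lm_add (c : W → W → ℝ) (f g : W → ℝ) (z : W) :
    Lm c (fun w => f w + g w) z = Lm c f z + Lm c g z := by
  unfold Lm
  simp only [mul_add, Finset.sum_add_distrib]
  ring

lemma Lm_sub (c : W → W → ℝ) (f g : W → ℝ) (z : W) :
    Lm c (fun w => f w - g w) z = Lm c f z - Lm c g z := by
  unfold Lm
  simp only [mul_sub, Finset.sum_sub_distrib]
  ring

lemma Lm_const (c : W → W → ℝ) (k : ℝ) (z : W) : Lm c (fun _ => k) z = 0 := by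
  unfold Lm
  rw [← Finset.sum_mul]
  unfold deg
  ring

end Aux

theorem stmt14 {V : Type*} [Fintype V] [DecidableEq V] (c₁ c₂ : V → V → ℝ)
    (hw₁ : IsWeight c₁) (hw₂ : IsWeight c₂)
    (hconn₁ : Conn c₁) (hconn₂ : Conn c₂)
    (hdeg₁ : ∀ x, 0 < deg c₁ x) (hdeg₂ : ∀ x, 0 < deg c₂ x)
    (R : V → V → ℝ) (h₁ : IsEffRes c₁ R) (h₂ : IsEffRes c₂ R) :
    c₁ = c₂ := by
  -- the canonical Dirichlet solutions, expressed purely in terms of R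
  set Φ : V → V → V → ℝ := fun x y z => (R x y + R z y - R z x) / 2 with hΦdef
  have hΦ₁ : ∀ x y : V, x ≠ y → IsDirichlet c₁ x y (Φ x y) := by
    intro x y hxy
    obtain ⟨φ, hφ, -⟩ := h₁.2 x y hxy
    have : φ = Φ x y := funext (dir_val c₁ hw₁ hconn₁ hdeg₁ h₁ hxy hφ)
    rwa [← this]
  have hΦ₂ : ∀ x y : V, x ≠ y → IsDirichlet c₂ x y (Φ x y) := by
    intro x y hxy
    obtain ⟨φ, hφ, -⟩ := h₂.2 x y hxy
    have : φ = Φ x y := funext (dir_val c₂ hw₂ hconn₂ hdeg₂ h₂ hxy hφ)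
    rwa [← this]
  funext z w
  by_cases hzw : z = w
  · rw [hzw, hw₁.2.2, hw₂.2.2]
  -- key: the unnormalized Laplacians agree on every function
  have key : ∀ f : V → ℝ, ∀ u, Lm c₁ f u = Lm c₂ f u := by
    intro f
    set v : V → ℝ := Lm c₁ f with hv
    set s : V → ℝ := fun u => ∑ x ∈ Finset.univ.erase z, v x * Φ x z u with hs
    have h0 : ∑ x, v x = 0 := by rw [hv]; exact Lm_sumzero c₁ hw₁ f
    have hvsum : ∑ x ∈ Finset.univ.erase z, v x = -v z := by
      have := Finset.add_sum_erase Finset.univ v (Finset.mem_univ z)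
      linarith
    have hLs : ∀ (c : V → V → ℝ), (∀ x, 0 < deg c x) →
        (∀ x : V, x ≠ z → IsDirichlet c x z (Φ x z)) → ∀ u, Lm c s u = v u := by
      intro c hdeg hΦc u
      rw [hs, Lm_sum]
      have hterm : ∀ x ∈ Finset.univ.erase z, v x * Lm c (Φ x z) u
          = (if u = x then v x else 0) - (if u = z then v x else 0) := by
        intro x hx
        have hxz : x ≠ z := Finset.ne_of_mem_erase hx
        rw [Lm_dirichlet c hdeg (hΦc x hxz) u]
        by_cases h1 : u = x <;> by_cases h2 : u = z
        · exact absurd (h1.symm.trans h2) hxz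
        · simp [h1, h2, hxz, Ne.symm hxz]
        · simp [h1, h2, hxz, Ne.symm hxz]
        · simp [h1, h2, hxz, Ne.symm hxz]
      rw [Finset.sum_congr rfl hterm, Finset.sum_sub_distrib]
      by_cases huz : u = z
      · subst huz
        have e1 : ∑ x ∈ Finset.univ.erase u, (if u = x then v x else 0) = 0 :=
          Finset.sum_eq_zero fun x hx => by
            simp [(Finset.ne_of_mem_erase hx).symm]
        have e2 : ∑ x ∈ Finset.univ.erase u, (if u = u then v x else 0)
            = ∑ x ∈ Finset.univ.erase u, v x := by simp
        rw [e1, e2, hvsum]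
        ring
      · have e1 : ∑ x ∈ Finset.univ.erase z, (if u = x then v x else 0) = v u := by
          rw [Finset.sum_ite_eq]
          simp [Finset.mem_erase, huz]
        have e2 : ∑ x ∈ Finset.univ.erase z, (if u = z then v x else 0) = 0 :=
          Finset.sum_eq_zero fun x _ => by simp [huz]
        rw [e1, e2, sub_zero]
    -- f - s is harmonic for c₁, hence constant
    have hlz : ∀ t, lap c₁ (fun q => f q - s q) t = 0 := by
      intro t
      have h1 : Lm c₁ (fun q => f q - s q) t = 0 := by
        rw [Lm_sub, hLs c₁ hdeg₁ (fun x hx => hΦ₁ x z hx) t, ← hv, sub_self]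
      have h2 := Lm_eq_lap c₁ (fun q => f q - s q) t (ne_of_gt (hdeg₁ t))
      rw [h1] at h2
      exact ((mul_eq_zero.mp h2.symm).resolve_left (ne_of_gt (hdeg₁ t)))
    have hconst := lap_const_of_zero c₁ hw₁ hconn₁ hdeg₁ _ hlz
    have hcon : (fun q => f q - s q) = fun _ => (f z - s z) := funext fun q => hconst q z
    intro u
    have h3 : Lm c₂ f u - Lm c₂ s u = 0 := by
      rw [← Lm_sub, hcon, Lm_const]
    have h4 : Lm c₂ s u = v u := hLs c₂ hdeg₂ (fun x hx => hΦ₂ x z hx) u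
    rw [hv] at h4 ⊢
    linarith
  have e1 := key (fun u => if u = w then (1:ℝ) else 0) z
  unfold Lm at e1
  simp only [hzw, if_false, mul_zero, mul_ite, mul_one] at e1
  rw [Finset.sum_ite_eq' Finset.univ w (c₁ z), Finset.sum_ite_eq' Finset.univ w (c₂ z)] at e1
  simp at e1
  linarith
end

section
/- Let (V,d) be a finite metric space with det A_y > 0 for all y, and suppose the solution matrix c of the systems A_y · c(·,y) = b_y (y ∈ V) has nonnegative entries. Then c is symmetric: c(x,y) = c(y,x) for all x, y ∈ V. -/
namespace S15

open Matrix

variable {V : Type*} [Fintype V] [DecidableEq V]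

/-- bordered matrix -/
noncomputable def Eh (d : V → V → ℝ) : Matrix (Option V) (Option V) ℝ :=
  Matrix.of fun i j => match i, j with
    | none, none => 0
    | none, some _ => 1
    | some _, none => 1
    | some u, some v => -(d u v) / 2

lemma det_rowop {W : Type*} [Fintype W] [DecidableEq W] (A : Matrix W W ℝ) (k : W)
    (c : W → ℝ) (hc : c k = 0) :
    (Matrix.of fun i j => A i j + c i * A k j).det = A.det := by
  have hM : (Matrix.of fun i j => A i j + c i * A k j : Matrix W W ℝ)
      = (1 + Matrix.vecMulVec c (Pi.single k 1 : W → ℝ)) * A := by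
    ext i j
    rw [Matrix.add_mul, Matrix.one_mul, Matrix.add_apply, Matrix.of_apply]
    congr 1
    rw [Matrix.mul_apply]
    simp [Matrix.vecMulVec_apply, Pi.single_apply, ite_mul, mul_ite, mul_assoc]
  rw [hM, Matrix.det_mul, Matrix.vecMulVec_eq Unit, Matrix.det_one_add_replicateCol_mul_replicateRow,
    single_dotProduct, one_mul, hc, add_zero, one_mul]

lemma det_colop {W : Type*} [Fintype W] [DecidableEq W] (A : Matrix W W ℝ) (k : W)
    (c : W → ℝ) (hc : c k = 0) :
    (Matrix.of fun i j => A i j + A i k * c j).det = A.det := by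
  rw [← Matrix.det_transpose A, ← det_rowop Aᵀ k c hc,
    ← Matrix.det_transpose (Matrix.of fun i j => A i j + A i k * c j)]
  congr 1
  ext i j
  simp [Matrix.transpose_apply, mul_comm]

lemma det_option (N : Matrix (Option V) (Option V) ℝ) (h : ∀ u, N (some u) none = 0) :
    N.det = N none none * (Matrix.of fun u v => N (some u) (some v)).det := by
  set e : V ⊕ PUnit.{1} ≃ Option V := (Equiv.optionEquivSumPUnit V).symm with he
  rw [← Matrix.det_submatrix_equiv_self e N]
  have : N.submatrix e e = Matrix.fromBlocks
      (Matrix.of fun u v => N (some u) (some v)) 0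
      (Matrix.of fun _ v => N none (some v)) (Matrix.of fun _ _ => N none none) := by
    ext i j
    rcases i with i | i <;> rcases j with j | j <;>
      simp [he, Matrix.submatrix_apply, Equiv.optionEquivSumPUnit, h]
  rw [this, Matrix.det_fromBlocks_zero₁₂, mul_comm]
  congr 1
  rw [Matrix.det_unique]
  rfl

variable {d : V → V → ℝ} (hs : ∀ a b : V, d a b = d b a) (h0 : ∀ a : V, d a a = 0)

include hs in
omit [Fintype V] [DecidableEq V] in
lemma Eh_symm : (Eh d)ᵀ = Eh d := by
  ext i j
  rcases i with _ | u <;> rcases j with _ | v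
  · rfl
  · rfl
  · rfl
  · show -(d v u) / 2 = -(d u v) / 2
    rw [hs v u]

include hs h0 in
lemma detA (y : V) : (Amat d y).det = -(Eh d).det := by
  classical
  -- X1
  have s1 : (Matrix.of fun i j => match i, j with
      | none, none => (0:ℝ)
      | none, some _ => 1
      | some _, none => 1
      | some u, some v => -(d u v) / 2 + d u y / 2 : Matrix (Option V) (Option V) ℝ).det
      = (Eh d).det := by
    have := det_rowop (Eh d) none (fun i => match i with | none => 0 | some u => d u y / 2) rfl
    rw [← this]
    congr 1
    ext i j
    rcases i with _ | u <;> rcases j with _ | v <;> simp [Eh] <;> ring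
  -- X2
  have s2 : (Matrix.of fun i j => match i, j with
      | none, none => (0:ℝ)
      | none, some _ => 1
      | some _, none => 1
      | some u, some v => (d u y + d y v - d u v) / 2 : Matrix (Option V) (Option V) ℝ).det
      = (Eh d).det := by
    rw [← s1]
    have := det_colop (Matrix.of fun i j => match i, j with
      | none, none => (0:ℝ)
      | none, some _ => 1
      | some _, none => 1
      | some u, some v => -(d u v) / 2 + d u y / 2 : Matrix (Option V) (Option V) ℝ)
      none (fun j => match j with | none => 0 | some v => d y v / 2) rfl
    rw [← this]
    congr 1
    ext i j
    rcases i with _ | u <;> rcases j with _ | v <;> simp <;> ring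
  -- X3
  have s3 : (Matrix.of fun i j => match i, j with
      | none, none => (-1:ℝ)
      | none, some _ => 1
      | some _, none => 1
      | some u, some v => (d u y + d y v - d u v) / 2 : Matrix (Option V) (Option V) ℝ).det
      = (Eh d).det := by
    rw [← s2]
    have := det_colop (Matrix.of fun i j => match i, j with
      | none, none => (0:ℝ)
      | none, some _ => 1
      | some _, none => 1
      | some u, some v => (d u y + d y v - d u v) / 2 : Matrix (Option V) (Option V) ℝ)
      (some y) (fun j => match j with | none => -1 | some _ => 0) rfl
    rw [← this]
    congr 1
    ext i j
    rcases i with _ | u <;> rcases j with _ | v <;> simp [h0 y] <;> ring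
  -- X4
  have s4 : (Matrix.of fun i j => match i, j with
      | none, none => (-1:ℝ)
      | none, some _ => 1
      | some _, none => 0
      | some u, some v => (d u y + d y v - d u v) / 2 + 1 : Matrix (Option V) (Option V) ℝ).det
      = (Eh d).det := by
    rw [← s3]
    have := det_rowop (Matrix.of fun i j => match i, j with
      | none, none => (-1:ℝ)
      | none, some _ => 1
      | some _, none => 1
      | some u, some v => (d u y + d y v - d u v) / 2 : Matrix (Option V) (Option V) ℝ)
      none (fun i => match i with | none => 0 | some _ => 1) rfl
    rw [← this]
    congr 1
    ext i j
    rcases i with _ | u <;> rcases j with _ | v <;> simp <;> ring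
  -- corner
  have s5 : (Eh d).det
      = -(Matrix.of fun u v => (d u y + d y v - d u v) / 2 + 1 : Matrix V V ℝ).det := by
    rw [← s4, det_option _ (fun u => rfl)]
    norm_num
  -- D5 : row op over V
  have s6 : (Matrix.of fun u v =>
        if u = y then (1:ℝ) else (d u y + d y v - d u v) / 2 : Matrix V V ℝ).det
      = (Matrix.of fun u v => (d u y + d y v - d u v) / 2 + 1 : Matrix V V ℝ).det := by
    have := det_rowop (Matrix.of fun u v => (d u y + d y v - d u v) / 2 + 1 : Matrix V V ℝ)
      y (fun u => if u = y then 0 else -1) (by simp)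
    rw [← this]
    congr 1
    ext u v
    by_cases hu : u = y <;> simp [hu, h0 y] <;> ring
  -- D6 = Amat
  have s7 : (Amat d y).det
      = (Matrix.of fun u v =>
        if u = y then (1:ℝ) else (d u y + d y v - d u v) / 2 : Matrix V V ℝ).det := by
    have := det_colop (Matrix.of fun u v =>
        if u = y then (1:ℝ) else (d u y + d y v - d u v) / 2 : Matrix V V ℝ)
      y (fun v => if v = y then 0 else -1) (by simp)
    rw [← this]
    congr 1
    ext u v
    by_cases hu : u = y <;> by_cases hv : v = y <;>
      simp [Amat, hu, hv, h0 y, hs y v, hs u y] <;> ring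
  rw [s7, s6, ← neg_eq_iff_eq_neg.mpr s5]

set_option maxHeartbeats 2000000 in
include hs h0 in
lemma detUpd {x y : V} (hxy : x ≠ y) :
    ((Amat d y).updateCol x (bvec y)).det
      = ((Eh d).updateCol (some x) (Pi.single (some y) 1)).det := by
  classical
  have hyx : y ≠ x := Ne.symm hxy
  -- C0 : closed form of the updated bordered matrix
  have s0 : ((Eh d).updateCol (some x) (Pi.single (some y) 1)).det
      = (Matrix.of fun i j => match i, j with
      | none, none => (0:ℝ)
      | none, some v => if v = x then 0 else 1
      | some _, none => 1
      | some u, some v => if v = x then (if u = y then 1 else 0) else -(d u v) / 2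
        : Matrix (Option V) (Option V) ℝ).det := by
    congr 1
    ext i j
    rcases i with _ | u <;> rcases j with _ | v <;>
      simp [Eh, Matrix.updateCol_apply, Pi.single_apply] <;>
      split_ifs <;> simp_all
  -- Y1 : row operations with pivot `none`
  have s1 : (Matrix.of fun i j => match i, j with
      | none, none => (0:ℝ)
      | none, some v => if v = x then 0 else 1
      | some _, none => 1
      | some u, some v => if v = x then (if u = y then 1 else 0) else -(d u v) / 2
        : Matrix (Option V) (Option V) ℝ).det
      = (Matrix.of fun i j => match i, j with
      | none, none => (0:ℝ)
      | none, some v => if v = x then 0 else 1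
      | some _, none => 1
      | some u, some v => if v = x then (if u = y then 1 else 0) else -(d u v) / 2 + d u y / 2
        : Matrix (Option V) (Option V) ℝ).det := by
    rw [← det_rowop (Matrix.of fun i j => match i, j with
      | none, none => (0:ℝ)
      | none, some v => if v = x then 0 else 1
      | some _, none => 1
      | some u, some v => if v = x then (if u = y then 1 else 0) else -(d u v) / 2
        : Matrix (Option V) (Option V) ℝ)
      none (fun i => match i with | none => 0 | some u => d u y / 2) rfl]
    congr 1
    ext i j
    rcases i with _ | u <;> rcases j with _ | v <;> simp <;> split_ifs <;> ring
  -- Y2 : column operations with pivot `none`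
  have s2 : (Matrix.of fun i j => match i, j with
      | none, none => (0:ℝ)
      | none, some v => if v = x then 0 else 1
      | some _, none => 1
      | some u, some v => if v = x then (if u = y then 1 else 0) else -(d u v) / 2 + d u y / 2
        : Matrix (Option V) (Option V) ℝ).det
      = (Matrix.of fun i j => match i, j with
      | none, none => (0:ℝ)
      | none, some v => if v = x then 0 else 1
      | some _, none => 1
      | some u, some v => if v = x then (if u = y then 1 else 0)
          else (d u y + d y v - d u v) / 2
        : Matrix (Option V) (Option V) ℝ).det := by
    rw [← det_colop (Matrix.of fun i j => match i, j with
      | none, none => (0:ℝ)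
      | none, some v => if v = x then 0 else 1
      | some _, none => 1
      | some u, some v => if v = x then (if u = y then 1 else 0) else -(d u v) / 2 + d u y / 2
        : Matrix (Option V) (Option V) ℝ)
      none (fun j => match j with | none => 0 | some v => if v = x then 0 else d y v / 2) rfl]
    congr 1
    ext i j
    rcases i with _ | u <;> rcases j with _ | v <;> simp <;> split_ifs <;> ring
  -- Y3 : column operation (col none minus col (some y))
  have s3 : (Matrix.of fun i j => match i, j with
      | none, none => (0:ℝ)
      | none, some v => if v = x then 0 else 1
      | some _, none => 1
      | some u, some v => if v = x then (if u = y then 1 else 0)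
          else (d u y + d y v - d u v) / 2
        : Matrix (Option V) (Option V) ℝ).det
      = (Matrix.of fun i j => match i, j with
      | none, none => (-1:ℝ)
      | none, some v => if v = x then 0 else 1
      | some _, none => 1
      | some u, some v => if v = x then (if u = y then 1 else 0)
          else (d u y + d y v - d u v) / 2
        : Matrix (Option V) (Option V) ℝ).det := by
    rw [← det_colop (Matrix.of fun i j => match i, j with
      | none, none => (0:ℝ)
      | none, some v => if v = x then 0 else 1
      | some _, none => 1
      | some u, some v => if v = x then (if u = y then 1 else 0)
          else (d u y + d y v - d u v) / 2
        : Matrix (Option V) (Option V) ℝ)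
      (some y) (fun j => match j with | none => -1 | some _ => 0) rfl]
    congr 1
    ext i j
    rcases i with _ | u <;> rcases j with _ | v <;> simp [hyx, h0 y] <;> split_ifs <;>
      simp_all [h0 y] <;> ring
  -- Y4 : row operations with pivot `none`
  have s4 : (Matrix.of fun i j => match i, j with
      | none, none => (-1:ℝ)
      | none, some v => if v = x then 0 else 1
      | some _, none => 1
      | some u, some v => if v = x then (if u = y then 1 else 0)
          else (d u y + d y v - d u v) / 2
        : Matrix (Option V) (Option V) ℝ).det
      = (Matrix.of fun i j => match i, j with
      | none, none => (-1:ℝ)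
      | none, some v => if v = x then 0 else 1
      | some _, none => 0
      | some u, some v => if v = x then (if u = y then 1 else 0)
          else (d u y + d y v - d u v) / 2 + 1
        : Matrix (Option V) (Option V) ℝ).det := by
    rw [← det_rowop (Matrix.of fun i j => match i, j with
      | none, none => (-1:ℝ)
      | none, some v => if v = x then 0 else 1
      | some _, none => 1
      | some u, some v => if v = x then (if u = y then 1 else 0)
          else (d u y + d y v - d u v) / 2
        : Matrix (Option V) (Option V) ℝ)
      none (fun i => match i with | none => 0 | some _ => 1) rfl]
    congr 1
    ext i j
    rcases i with _ | u <;> rcases j with _ | v <;> simp <;> split_ifs <;> ring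
  -- corner elimination
  have s5 : (Matrix.of fun i j => match i, j with
      | none, none => (-1:ℝ)
      | none, some v => if v = x then 0 else 1
      | some _, none => 0
      | some u, some v => if v = x then (if u = y then 1 else 0)
          else (d u y + d y v - d u v) / 2 + 1
        : Matrix (Option V) (Option V) ℝ).det
      = -(Matrix.of fun u v => if v = x then (if u = y then (1:ℝ) else 0)
          else (d u y + d y v - d u v) / 2 + 1 : Matrix V V ℝ).det := by
    rw [det_option _ (fun u => rfl)]
    norm_num
  -- D4 : subtract column x from column y
  have s6 : (Matrix.of fun u v => if v = x then (if u = y then (1:ℝ) else 0)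
          else (d u y + d y v - d u v) / 2 + 1 : Matrix V V ℝ).det
      = (Matrix.of fun u v => if v = x then (if u = y then (1:ℝ) else 0)
          else if v = y then (if u = y then 0 else 1)
          else (d u y + d y v - d u v) / 2 + 1 : Matrix V V ℝ).det := by
    rw [← det_colop (Matrix.of fun u v => if v = x then (if u = y then (1:ℝ) else 0)
          else (d u y + d y v - d u v) / 2 + 1 : Matrix V V ℝ)
      x (fun v => if v = y then -1 else 0) (by simp [hxy])]
    congr 1
    ext u v
    by_cases hv : v = x <;> by_cases hv2 : v = y <;> by_cases hu : u = y <;>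
      simp_all [h0 y] <;> ring
  -- D5 : swap columns x and y
  have s7 : (Matrix.of fun u v => if v = x then (if u = y then (1:ℝ) else 0)
          else if v = y then (if u = y then 0 else 1)
          else (d u y + d y v - d u v) / 2 + 1 : Matrix V V ℝ).det
      = -(Matrix.of fun u v => if v = x then (if u = y then (0:ℝ) else 1)
          else if v = y then (if u = y then 1 else 0)
          else (d u y + d y v - d u v) / 2 + 1 : Matrix V V ℝ).det := by
    have hsub : (Matrix.of fun u v => if v = x then (if u = y then (0:ℝ) else 1)
          else if v = y then (if u = y then 1 else 0)
          else (d u y + d y v - d u v) / 2 + 1 : Matrix V V ℝ)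
        = (Matrix.of fun u v => if v = x then (if u = y then (1:ℝ) else 0)
          else if v = y then (if u = y then 0 else 1)
          else (d u y + d y v - d u v) / 2 + 1 : Matrix V V ℝ).submatrix id (Equiv.swap x y) := by
      ext u v
      by_cases hv : v = x <;> by_cases hv2 : v = y <;>
        simp_all [Matrix.submatrix_apply, Equiv.swap_apply_def, hxy, hyx]
    rw [hsub, Matrix.det_permute', Equiv.Perm.sign_swap hxy]
    simp
  -- D6 : subtract column x from the other columns
  have s8 : (Matrix.of fun u v => if v = x then (if u = y then (0:ℝ) else 1)
          else if v = y then (if u = y then 1 else 0)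
          else (d u y + d y v - d u v) / 2 + 1 : Matrix V V ℝ).det
      = (Matrix.of fun u v => if v = x then (if u = y then (0:ℝ) else 1)
          else if v = y then (if u = y then 1 else 0)
          else (if u = y then 1 else (d u y + d y v - d u v) / 2) : Matrix V V ℝ).det := by
    rw [← det_colop (Matrix.of fun u v => if v = x then (if u = y then (0:ℝ) else 1)
          else if v = y then (if u = y then 1 else 0)
          else (d u y + d y v - d u v) / 2 + 1 : Matrix V V ℝ)
      x (fun v => if v = x ∨ v = y then 0 else -1) (by simp)]
    congr 1
    ext u v
    by_cases hv : v = x <;> by_cases hv2 : v = y <;> by_cases hu : u = y <;>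
      simp_all [h0 y] <;> ring
  -- D7 : subtract column y from the other columns
  have s9 : (Matrix.of fun u v => if v = x then (if u = y then (0:ℝ) else 1)
          else if v = y then (if u = y then 1 else 0)
          else (if u = y then 1 else (d u y + d y v - d u v) / 2) : Matrix V V ℝ).det
      = (Matrix.of fun u v => if v = x then (if u = y then (0:ℝ) else 1)
          else if v = y then (if u = y then 1 else 0)
          else (if u = y then 0 else (d u y + d y v - d u v) / 2) : Matrix V V ℝ).det := by
    rw [← det_colop (Matrix.of fun u v => if v = x then (if u = y then (0:ℝ) else 1)
          else if v = y then (if u = y then 1 else 0)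
          else (if u = y then 1 else (d u y + d y v - d u v) / 2) : Matrix V V ℝ)
      y (fun v => if v = x ∨ v = y then 0 else -1) (by simp)]
    congr 1
    ext u v
    by_cases hv : v = x <;> by_cases hv2 : v = y <;> by_cases hu : u = y <;>
      simp_all [hyx] <;> ring
  -- identification with the updated A-matrix
  have s10 : ((Amat d y).updateCol x (bvec y)).det
      = (Matrix.of fun u v => if v = x then (if u = y then (0:ℝ) else 1)
          else if v = y then (if u = y then 1 else 0)
          else (if u = y then 0 else (d u y + d y v - d u v) / 2) : Matrix V V ℝ).det := by
    congr 1
    ext u v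
    by_cases hv : v = x <;> by_cases hv2 : v = y <;> by_cases hu : u = y <;>
      simp_all [Amat, bvec, Matrix.updateCol_apply, h0 y, hyx]
  linarith [s0, s1, s2, s3, s4, s5, s6, s7, s8, s9, s10]

end S15

open Matrix in
theorem stmt15 {V : Type*} [Fintype V] [DecidableEq V] (d : V → V → ℝ) (hd : IsMetric d)
    (hdet : ∀ y : V, 0 < (Amat d y).det) (c : V → V → ℝ)
    (hsol : ∀ y : V, (Amat d y).mulVec (fun z => c z y) = bvec y)
    (hnn : ∀ x y : V, 0 ≤ c x y) :
    ∀ x y : V, c x y = c y x := by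
  classical
  obtain ⟨hnonneg, hzero, hs, htri⟩ := hd
  have h0 : ∀ a : V, d a a = 0 := fun a => (hzero a a).mpr rfl
  intro x y
  by_cases hxy : x = y
  · rw [hxy]
  -- Cramer's rule
  have cram : ∀ (z w : V), ((Amat d w).updateCol z (bvec w)).det = (Amat d w).det * c z w := by
    intro z w
    have h1 : Matrix.cramer (Amat d w) (bvec w) = (Amat d w).det • fun z => c z w := by
      rw [← hsol w, Matrix.cramer_eq_adjugate_mulVec, Matrix.mulVec_mulVec,
        Matrix.adjugate_mul, Matrix.smul_mulVec, Matrix.one_mulVec]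
    have := congrFun h1 z
    rw [Matrix.cramer_apply] at this
    simpa using this
  -- symmetry of the bordered adjugate
  have hadj : ((S15.Eh d).updateCol (some x) (Pi.single (some y) 1)).det
      = ((S15.Eh d).updateCol (some y) (Pi.single (some x) 1)).det := by
    have hES : (S15.Eh d)ᵀ = S15.Eh d := S15.Eh_symm hs
    have key : ∀ a b : V, ((S15.Eh d).updateCol (some a) (Pi.single (some b) 1)).det
        = (S15.Eh d).adjugate (some b) (some a) := by
      intro a b
      rw [Matrix.adjugate_apply, ← Matrix.det_transpose ((S15.Eh d).updateRow _ _),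
        ← Matrix.updateCol_transpose, hES]
    have h2 : (S15.Eh d).adjugate = ((S15.Eh d).adjugate)ᵀ := by
      rw [Matrix.adjugate_transpose, hES]
    rw [key, key]
    conv_lhs => rw [h2, Matrix.transpose_apply]
  have e1 := S15.detUpd hs h0 hxy
  have e2 := S15.detUpd hs h0 (Ne.symm hxy)
  have edet : (Amat d y).det = (Amat d x).det := by
    rw [S15.detA hs h0 y, S15.detA hs h0 x]
  have : (Amat d y).det * c x y = (Amat d y).det * c y x := by
    rw [← cram x y, e1, hadj, ← e2, cram y x, edet]
  exact mul_left_cancel₀ (ne_of_gt (hdet y)) this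
end

section
/- Let (V,d) be a finite metric space, assume det A_y > 0 for all y ∈ V and that the unique solution matrix c of A_y · c(·,y) = b_y is entrywise nonnegative. Then for x ≠ y, the function φ^{xy}(z) := (d(x,y)+d(y,z)-d(x,z))/2 solves Δφ^{xy} = (1/c_x)1_x - (1/c_y)1_y with φ^{xy}(y) = 0 for the Laplacian of the graph (V,c), and consequently the effective resistance of (V,c) equals d. -/
theorem stmt16 {V : Type*} [Fintype V] [DecidableEq V] (d : V → V → ℝ) (hd : IsMetric d)
    (hdet : ∀ y : V, 0 < (Amat d y).det) (c : V → V → ℝ)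
    (hsol : ∀ y : V, (Amat d y).mulVec (fun z => c z y) = bvec y)
    (hnn : ∀ x y : V, 0 ≤ c x y) (hsymm : ∀ x y : V, c x y = c y x)
    (hdiag : ∀ x : V, c x x = 0) (hdeg : ∀ x : V, 0 < deg c x) :
    (∀ x y : V, x ≠ y →
      IsDirichlet c x y (fun z => (d x y + d y z - d x z) / 2)) ∧
    IsEffRes c d := by
  have hdd : ∀ x, d x x = 0 := fun x => (hd.2.1 x x).mpr rfl
  have hdsymm : ∀ x y, d x y = d y x := hd.2.2.1
  have key : ∀ z u : V, ∑ w, Mdef d z u w * c w z = if u = z then 0 else 1 := by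
    intro z u
    by_cases hu : u = z
    · subst hu
      rw [if_pos rfl]
      apply Finset.sum_eq_zero
      intro w _
      simp [Mdef, hdd]
    · have h := congrFun (hsol z) u
      simp only [Matrix.mulVec, dotProduct, bvec, if_neg hu] at h
      rw [if_neg hu, ← h]
      apply Finset.sum_congr rfl
      intro w _
      congr 1
      simp [Amat, Mdef, hu]
  have main : ∀ x y : V, x ≠ y →
      IsDirichlet c x y (fun z => (d x y + d y z - d x z) / 2) := by
    intro x y hxy
    constructor
    · intro z
      have hφ : ∀ w, (d x y + d y w - d x w) / 2 =
          (d x y + d y z - d x z) / 2 + Mdef d z x w - Mdef d z y w := by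
        intro w; simp only [Mdef]; ring
      have hD : deg c z ≠ 0 := (hdeg z).ne'
      have hsum : ∑ w, c z w * ((d x y + d y w - d x w) / 2) =
          (d x y + d y z - d x z) / 2 * deg c z +
          ((if x = z then 0 else 1) - (if y = z then 0 else 1)) := by
        rw [← key z x, ← key z y]
        rw [deg, Finset.mul_sum, ← Finset.sum_sub_distrib, ← Finset.sum_add_distrib]
        apply Finset.sum_congr rfl
        intro w _
        rw [hφ w, hsymm z w]
        ring
      simp only [lap]
      have : ∑ w, c z w / deg c z * ((d x y + d y w - d x w) / 2) =
          (∑ w, c z w * ((d x y + d y w - d x w) / 2)) / deg c z := by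
        rw [Finset.sum_div]
        apply Finset.sum_congr rfl
        intro w _; ring
      rw [this, hsum]
      by_cases hzx : z = x
      · subst hzx
        have hzy : z ≠ y := hxy
        rw [if_pos rfl, if_neg hzy, if_neg (Ne.symm hzy), if_pos rfl]
        field_simp <;> ring_nf
      · by_cases hzy : z = y
        · subst hzy
          rw [if_neg hzx, if_pos rfl, if_pos rfl, if_neg (fun h => hzx h.symm)]
          field_simp <;> ring_nf
        · rw [if_neg hzx, if_neg hzy, if_neg (fun h => hzx h.symm),
            if_neg (fun h => hzy h.symm)]
          field_simp <;> ring_nf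
    · simp [hdd, hdsymm x y]
  refine ⟨main, hdd, ?_⟩
  intro x y hxy
  refine ⟨_, main x y hxy, ?_⟩
  show (d x y + d y x - d x x) / 2 = d x y
  rw [hdd x, hdsymm y x]
  ring
end
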